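/- arXiv:2309.09849 — 4 statements merged into one kernel-verified Lean document; each statement's English description precedes it below -/
import Mathlib

section
/- Let G=(V,E) be a finite graph, m1,m2≥1 integers, p,q≥2, λ>0, h1,h2:V→(0,∞), and F:V×ℝ²→ℝ. Assume: (F0) for every x∈V the map (s,t)↦F(x,s,t) is continuously differentiable on ℝ²; (F1) ∑_{x∈V} μ(x)F(x,0,0)=0; (F2) there exist α∈[0,p), β∈[0,q) and functions f1,f2,g:V→ℝ with F(x,s,t) ≤ f1(x)|s|^α + f2(x)|t|^β + g(x) for all (x,s,t)∈V×ℝ²; (F3) there exist γ1,γ2,δ1,δ2>0 with δ1>γ1κ1 and δ2>γ2κ2, where κ1=((1/p)∫_V h1 dμ)^{-1/p} and κ2=((1/q)∫_V h2 dμ)^{-1/q}, such that Λ1<Λ2, where Λ1 = (γ1^p+γ2^q)^{-1}·(max{F(x,s,t) : x∈V, |s| ≤ (p(γ1^p+γ2^q))^{1/p}/(h_{1,min}^{1/p}·μ_min^{1/p}), |t| ≤ (q(γ1^p+γ2^q))^{1/q}/(h_{2,min}^{1/q}·μ_min^{1/q})})·|V| and Λ2 = (min_{x∈V}F(x,δ1,δ2))·|V|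 / ((δ1^p/p)∫_V h1 dμ + (δ2^q/q)∫_V h2 dμ). Then for every λ>0 with λ·Λ2 > 1 and λ·Λ1 < 1, the system 𝓛_{m1,p}u + h1|u|^{p−2}u = λF_s(x,u,v), 𝓛_{m2,q}v + h2|v|^{q−2}v = λF_t(x,u,v) has at least three pairwise distinct solutions (u,v). -/
open Real

noncomputable section

variable {V : Type*}

/-- Integral on a finite graph: `∫_V u dμ = ∑_{x∈V} μ(x) u(x)`. -/
def intV [Fintype V] (μ u : V → ℝ) : ℝ := ∑ x, μ x * u x

/-- Graph Laplacian. -/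
def glap [Fintype V] (w : V → V → ℝ) (μ : V → ℝ) (u : V → ℝ) (x : V) : ℝ :=
  (1 / μ x) * ∑ y, w x y * (u y - u x)

/-- The bilinear form Γ. -/
def ggam [Fintype V] (w : V → V → ℝ) (μ : V → ℝ) (u v : V → ℝ) (x : V) : ℝ :=
  (1 / (2 * μ x)) * ∑ y, w x y * (u y - u x) * (v y - v x)

/-- Length of the gradient: `|∇u|(x) = √(Γ(u,u)(x))`. -/
def gnorm [Fintype V] (w : V → V → ℝ) (μ : V → ℝ) (u : V → ℝ) (x : V) : ℝ :=
  Real.sqrt (ggam w μ u u x)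

/-- The length `|∇^m u|` of the m-th order gradient. -/
def gradm [Fintype V] (w : V → V → ℝ) (μ : V → ℝ) (m : ℕ) (u : V → ℝ) (x : V) : ℝ :=
  if m % 2 = 1 then gnorm w μ ((glap w μ)^[(m - 1) / 2] u) x
  else |((glap w μ)^[m / 2] u) x|

/-- The Sobolev norm `‖u‖_{W^{m,l}}` (with weight `h`). -/
def wnorm [Fintype V] (w : V → V → ℝ) (μ h : V → ℝ) (m : ℕ) (l : ℝ) (u : V → ℝ) : ℝ :=
  (intV μ (fun x => gradm w μ m u x ^ l + h x * |u x| ^ l)) ^ (1 / l)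

/-- min of a function over the (nonempty finite) vertex set. -/
def fmin [Fintype V] [Nonempty V] (f : V → ℝ) : ℝ :=
  Finset.univ.inf' Finset.univ_nonempty f

/-- max of a function over the (nonempty finite) vertex set. -/
def fmax [Fintype V] [Nonempty V] (f : V → ℝ) : ℝ :=
  Finset.univ.sup' Finset.univ_nonempty f

/-- The poly-Laplacian pairing `B_{m,p}(u,φ)`. -/
def Bmp [Fintype V] (w : V → V → ℝ) (μ : V → ℝ) (m : ℕ) (p : ℝ) (u φ : V → ℝ) : ℝ :=
  if m % 2 = 1 then
    intV μ (fun x => gradm w μ m u x ^ (p - 2) *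
      ggam w μ ((glap w μ)^[(m - 1) / 2] u) ((glap w μ)^[(m - 1) / 2] φ) x)
  else
    intV μ (fun x => gradm w μ m u x ^ (p - 2) *
      ((glap w μ)^[m / 2] u x) * ((glap w μ)^[m / 2] φ x))

end

noncomputable section
variable {V : Type*}

/-- `(u,v)` is a (weak) solution of the poly-Laplacian system
`𝓛_{m1,p}u + h1|u|^{p−2}u = λ F_s(x,u,v)`, `𝓛_{m2,q}v + h2|v|^{q−2}v = λ F_t(x,u,v)`. -/
def isSolSys [Fintype V] (w : V → V → ℝ) (μ h1 h2 : V → ℝ) (m1 m2 : ℕ)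
    (p q lam : ℝ) (Fs Ft : V → ℝ → ℝ → ℝ) (u v : V → ℝ) : Prop :=
  ∀ φ1 φ2 : V → ℝ,
    Bmp w μ m1 p u φ1 + intV μ (fun x => h1 x * |u x| ^ (p - 2) * u x * φ1 x) =
      lam * intV μ (fun x => Fs x (u x) (v x) * φ1 x) ∧
    Bmp w μ m2 q v φ2 + intV μ (fun x => h2 x * |v x| ^ (q - 2) * v x * φ2 x) =
      lam * intV μ (fun x => Ft x (u x) (v x) * φ2 x)

end


/-!
The system is the Euler–Lagrange equation of `J_λ = Φ - λΨ` on the finite-dimensional space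
`(V → ℝ) × (V → ℝ)`, where `Φ(u, v) = ‖u‖^p/p + ‖v‖^q/q` and `Ψ(u, v) = ∫_V F(x, u, v) dμ`.
By (F2) the functional `J_λ` is coercive, so its sublevel sets are compact. With
`r = γ₁^p + γ₂^q`, every `(u, v)` on the level set `Φ = r` takes values in the box over which
`Λ₁` is computed, hence `J_λ ≥ r (1 - λΛ₁) > 0` there. On the other hand `J_λ(0, 0) = 0` by (F1),
and the constant pair `(δ₁, δ₂)` has `Φ > r` by the choice of `δᵢ` and `J_λ < 0` because
`λΛ₂ > 1`. Minimising `J_λ` on either side of the barrier `Φ = r` gives two local minima, and a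
mountain pass between them gives a third critical point; in finite dimension the deformation
behind the mountain pass only needs a continuous descent field and the compact sublevel sets.
-/

noncomputable section

namespace PolyLaplacianSystem

section CriticalPoints

open Set Filter Topology

variable {X : Type*}

lemma exists_isLocalMin_of_barrier [TopologicalSpace X] {J Φ : X → ℝ} (hJ : Continuous J)
    (hcoercive : ∀ b, IsCompact {z | J z ≤ b}) (hΦ : Continuous Φ) {r c : ℝ}
    (hbarrier : ∀ z, Φ z = r → c ≤ J z) {z₀ : X} (hz₀ : Φ z₀ ≤ r) (hJz₀ : J z₀ < c) :
    ∃ z, Φ z < r ∧ J z ≤ J z₀ ∧ IsLocalMin J z := by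
  have hS : IsCompact ({z | J z ≤ J z₀} ∩ {z | Φ z ≤ r}) :=
    (hcoercive _).of_isClosed_subset ((isClosed_le hJ continuous_const).inter
      (isClosed_le hΦ continuous_const)) inter_subset_left
  obtain ⟨z, ⟨hzJ, hzΦ⟩, hmin⟩ := hS.exists_isMinOn ⟨z₀, ⟨le_refl (J z₀), hz₀⟩⟩ hJ.continuousOn
  have hzr : Φ z < r := hzΦ.lt_of_ne fun h => (hbarrier z h).not_gt (hzJ.trans_lt hJz₀)
  refine ⟨z, hzr, hzJ, ?_⟩
  filter_upwards [(isOpen_lt hΦ continuous_const).mem_nhds hzr] with y hy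
  by_cases hyJ : J y ≤ J z₀
  · exact hmin ⟨hyJ, hy.le⟩
  · exact hzJ.trans (not_le.mp hyJ).le

lemma exists_uniform_pos_near_zero [TopologicalSpace X] {K : Set X} (hK : IsCompact K)
    {f : X → ℝ → ℝ} (hf : Continuous fun p : X × ℝ => f p.1 p.2) (hpos : ∀ x ∈ K, 0 < f x 0) :
    ∃ e > 0, ∃ h > 0, ∀ x ∈ K, ∀ t ∈ Icc 0 h, e ≤ f x t := by
  rcases K.eq_empty_or_nonempty with rfl | hne
  · exact ⟨1, one_pos, 1, one_pos, by simp⟩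
  obtain ⟨x₀, hx₀, hmin⟩ :=
    hK.exists_isMinOn hne (hf.comp (continuous_id.prodMk continuous_const)).continuousOn
  have he : 0 < f x₀ 0 := hpos x₀ hx₀
  have hnear : ∀ᶠ t in 𝓝 (0 : ℝ), ∀ x ∈ K, f x₀ 0 / 2 < f x t := by
    refine hK.eventually_forall_of_forall_eventually fun x hx => ?_
    have hcont : ContinuousAt (fun p : ℝ × X => f p.2 p.1) (0, x) :=
      (hf.comp continuous_swap).continuousAt
    exact hcont.eventually (lt_mem_nhds (by linarith [show f x₀ 0 ≤ f x 0 from hmin hx]))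
  obtain ⟨δ, hδ, hball⟩ := Metric.eventually_nhds_iff.mp hnear
  refine ⟨f x₀ 0 / 2, by positivity, δ / 2, by positivity, fun x hx t ht => (hball ?_ x hx).le⟩
  rw [Real.dist_eq, sub_zero, abs_of_nonneg ht.1]
  linarith [ht.2]

lemma iterate_deformation {J : X → ℝ} {η : X → X} {b c d : ℝ}
    (hη : ∀ x, J x ≤ b → J (η x) ≤ J x ∧ (c ≤ J x → J (η x) ≤ J x - d)) (n : ℕ) {x : X}
    (hx : J x ≤ b) : J (η^[n] x) ≤ b ∧ (c ≤ J (η^[n] x) → J (η^[n] x) ≤ b - n * d) := by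
  induction n with
  | zero => exact ⟨hx, fun _ => by simpa using hx⟩
  | succ n ih =>
    rw [Function.iterate_succ_apply']
    obtain ⟨hdecr, hdrop⟩ := hη _ ih.1
    refine ⟨hdecr.trans ih.1, fun hc => ?_⟩
    have := ih.2 (hc.trans hdecr)
    have := hdrop (hc.trans hdecr)
    push_cast
    linarith

variable [NormedAddCommGroup X] [NormedSpace ℝ X] {J : X → ℝ} {J' : X → X →L[ℝ] ℝ}

lemma hasDerivAt_of_hasLineDerivAt (hderiv : ∀ z ξ, HasLineDerivAt ℝ J (J' z ξ) z ξ)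
    (z ξ : X) (t : ℝ) : HasDerivAt (fun s : ℝ => J (z + s • ξ)) (J' (z + t • ξ) ξ) t := by
  have hshift : (fun s : ℝ => J (z + s • ξ)) = fun s => J (z + t • ξ + (s - t) • ξ) := by
    funext s
    rw [add_assoc, ← add_smul, add_sub_cancel]
  rw [hshift]
  exact HasDerivAt.comp_sub_const t t (by rw [sub_self]; exact hderiv (z + t • ξ) ξ)

lemma eq_zero_of_isLocalMin (hderiv : ∀ z ξ, HasLineDerivAt ℝ J (J' z ξ) z ξ) {z : X}
    (hz : IsLocalMin J z) : J' z = 0 := by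
  ext ξ
  have hline : IsLocalMin (fun s : ℝ => J (z + s • ξ)) 0 :=
    IsLocalMin.comp_continuous (g := fun s : ℝ => z + s • ξ) (by simpa using hz) (by fun_prop)
  exact hline.hasDerivAt_eq_zero (hderiv z ξ)

/-- In a basis `b`, the field `g z = ∑ i, J' z (b i) • b i` has
`J' z (g z) = ∑ i, J' z (b i) ^ 2`. -/
lemma exists_continuous_descent_field [FiniteDimensional ℝ X] (hJ' : Continuous J') :
    ∃ g : X → X, Continuous g ∧ ∀ z, J' z ≠ 0 → 0 < J' z (g z) := by
  let b := Module.finBasis ℝ X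
  refine ⟨fun z => ∑ i, J' z (b i) • b i, by fun_prop, fun z hz => ?_⟩
  simp only [map_sum, map_smul, smul_eq_mul]
  refine lt_of_le_of_ne (Finset.sum_nonneg fun i _ => mul_self_nonneg _) fun h => hz ?_
  have hzero := (Finset.sum_eq_zero_iff_of_nonneg fun i _ => mul_self_nonneg _).mp h.symm
  exact ContinuousLinearMap.coe_injective (b.ext fun i => by
    simpa using mul_self_eq_zero.mp (hzero i (Finset.mem_univ i)))

lemma apply_sub_smul_le_of_le_lineDeriv (hderiv : ∀ z ξ, HasLineDerivAt ℝ J (J' z ξ) z ξ)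
    {x v : X} {e τ : ℝ} (hτ : 0 ≤ τ) (he : ∀ t ∈ Icc 0 τ, e ≤ J' (x - t • v) v) :
    J (x - τ • v) ≤ J x - τ * e := by
  have hline : ∀ t, HasDerivAt (fun s : ℝ => J (x - s • v)) (-J' (x - t • v) v) t := fun t => by
    simpa [sub_eq_add_neg, ← neg_smul, smul_neg] using hasDerivAt_of_hasLineDerivAt hderiv x (-v) t
  have key := (convex_Icc (0 : ℝ) τ).image_sub_le_mul_sub_of_deriv_le (C := -e)
    (fun t _ => (hline t).continuousAt.continuousWithinAt)
    (fun t _ => (hline t).differentiableAt.differentiableWithinAt)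
    (fun t ht => by
      rw [interior_Icc] at ht
      rw [(hline t).deriv]
      linarith [he t (Ioo_subset_Icc_self ht)])
    0 (left_mem_Icc.mpr hτ) τ (right_mem_Icc.mpr hτ) hτ
  simp only [zero_smul, sub_zero] at key
  linarith

/-- `η` moves `x` along the descent field by a step `h₀ χ(x)`, where the cut-off `χ` vanishes on
`{J ≤ a}` and equals `1` on `{c ≤ J}`; the step `h₀` is uniform because `{a ≤ J ≤ b}` is compact
and free of critical points. -/
lemma exists_deformation [FiniteDimensional ℝ X] (hJ : Continuous J) (hJ' : Continuous J')
    (hderiv : ∀ z ξ, HasLineDerivAt ℝ J (J' z ξ) z ξ) (hcoercive : ∀ b, IsCompact {z | J z ≤ b})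
    {a c : ℝ} (hac : a < c) (hcrit : ∀ z, J' z = 0 → J z < a) (b : ℝ) :
    ∃ η : X → X, ∃ d > 0, Continuous η ∧ (∀ x, J x ≤ a → η x = x) ∧
      ∀ x, J x ≤ b → J (η x) ≤ J x ∧ (c ≤ J x → J (η x) ≤ J x - d) := by
  obtain ⟨g, hg, hgpos⟩ := exists_continuous_descent_field hJ'
  have hK : IsCompact ({x | a ≤ J x} ∩ {x | J x ≤ b}) := (hcoercive b).of_isClosed_subset
    ((isClosed_le continuous_const hJ).inter (isClosed_le hJ continuous_const)) inter_subset_right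
  obtain ⟨e, he, h₀, hh₀, hstep⟩ := exists_uniform_pos_near_zero hK
    (f := fun x t => J' (x - t • g x) (g x)) (by fun_prop)
    (fun x hx => by simpa using hgpos x fun h => (hcrit x h).not_ge hx.1)
  set χ : X → ℝ := fun x => min 1 (max 0 ((J x - a) / (c - a)))
  have hχ0 : ∀ x, 0 ≤ χ x := fun x => le_min zero_le_one (le_max_left _ _)
  have hχ1 : ∀ x, χ x ≤ 1 := fun x => min_le_left _ _
  have hχa : ∀ x, J x ≤ a → χ x = 0 := fun x hx => by
    have : (J x - a) / (c - a) ≤ 0 := div_nonpos_of_nonpos_of_nonneg (by linarith) (by linarith)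
    simp only [χ, max_eq_left this, min_eq_right zero_le_one]
  have hχc : ∀ x, c ≤ J x → χ x = 1 := fun x hx =>
    min_eq_left (le_max_of_le_right ((one_le_div (by linarith)).mpr (by linarith)))
  refine ⟨fun x => x - (h₀ * χ x) • g x, h₀ * e, by positivity, by fun_prop,
    fun x hx => by simp [hχa x hx], fun x hxb => ?_⟩
  have hdecr : J (x - (h₀ * χ x) • g x) ≤ J x - h₀ * χ x * e := by
    rcases le_or_gt (J x) a with hxa | hxa
    · simp [hχa x hxa]
    · refine apply_sub_smul_le_of_le_lineDeriv hderiv (by positivity [hχ0 x]) fun t ht =>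
        hstep x ⟨hxa.le, hxb⟩ t ⟨ht.1, ht.2.trans ?_⟩
      exact mul_le_of_le_one_right hh₀.le (hχ1 x)
  refine ⟨hdecr.trans (sub_le_self _ (mul_nonneg (mul_nonneg hh₀.le (hχ0 x)) he.le)),
    fun hcx => ?_⟩
  simpa [hχc x hcx] using hdecr

/-- Were there no critical point at a level `≥ a`, deform the segment from `z₁` to `z₂` by
`η^[N]`: its ends stay put and it still crosses the barrier, where `J ≥ c`, yet every point of it
with `J ≥ c` has lost `N d`. -/
theorem exists_critical_point_of_mountain_pass [FiniteDimensional ℝ X] (hJ : Continuous J)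
    (hJ' : Continuous J') (hderiv : ∀ z ξ, HasLineDerivAt ℝ J (J' z ξ) z ξ)
    (hcoercive : ∀ b, IsCompact {z | J z ≤ b}) {Φ : X → ℝ} (hΦ : Continuous Φ) {r a c : ℝ}
    (hac : a < c) (hbarrier : ∀ z, Φ z = r → c ≤ J z) {z₁ z₂ : X} (hz₁ : Φ z₁ ≤ r)
    (hz₂ : r ≤ Φ z₂) (hJz₁ : J z₁ ≤ a) (hJz₂ : J z₂ ≤ a) : ∃ z, J' z = 0 ∧ a ≤ J z := by
  by_contra! hcrit
  set σ : ℝ → X := fun s => z₁ + s • (z₂ - z₁)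
  have hσ : Continuous σ := by fun_prop
  obtain ⟨s₀, -, hmax⟩ := isCompact_Icc.exists_isMaxOn (nonempty_Icc.mpr zero_le_one)
    (hJ.comp hσ).continuousOn
  obtain ⟨η, d, hd, hη, hfix, hdecr⟩ :=
    exists_deformation hJ hJ' hderiv hcoercive hac hcrit (J (σ s₀))
  obtain ⟨N, hN⟩ := exists_nat_gt ((J (σ s₀) - c) / d)
  have hfixN : ∀ x, J x ≤ a → η^[N] x = x := fun x hx => Function.iterate_fixed (hfix x hx) N
  obtain ⟨s, hs, hcross⟩ := intermediate_value_Icc zero_le_one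
    ((hΦ.comp ((hη.iterate N).comp hσ)).continuousOn)
    (show r ∈ Icc _ _ by simpa [σ, hfixN z₁ hJz₁, hfixN z₂ hJz₂] using And.intro hz₁ hz₂)
  have hc : c ≤ J (η^[N] (σ s)) := hbarrier _ hcross
  have := (iterate_deformation hdecr N (hmax hs)).2 hc
  rw [div_lt_iff₀ hd] at hN
  linarith

/-- `z₁` and `z₂` minimise `J` on either side of the barrier, and `z₃` comes from the mountain
pass between them at a level above both. -/
theorem exists_three_critical_points [FiniteDimensional ℝ X] (hJ : Continuous J)
    (hJ' : Continuous J') (hderiv : ∀ z ξ, HasLineDerivAt ℝ J (J' z ξ) z ξ)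
    (hcoercive : ∀ b, IsCompact {z | J z ≤ b}) {Φ : X → ℝ} (hΦ : Continuous Φ) {r c : ℝ}
    (hbarrier : ∀ z, Φ z = r → c ≤ J z) {z₀ z₀' : X} (hz₀ : Φ z₀ ≤ r) (hJz₀ : J z₀ < c)
    (hz₀' : r ≤ Φ z₀') (hJz₀' : J z₀' < c) :
    ∃ z₁ z₂ z₃, J' z₁ = 0 ∧ J' z₂ = 0 ∧ J' z₃ = 0 ∧ z₁ ≠ z₂ ∧ z₁ ≠ z₃ ∧ z₂ ≠ z₃ := by
  obtain ⟨z₁, hΦz₁, hJz₁, hmin₁⟩ := exists_isLocalMin_of_barrier hJ hcoercive hΦ hbarrier hz₀ hJz₀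
  obtain ⟨z₂, hΦz₂, hJz₂, hmin₂⟩ := exists_isLocalMin_of_barrier hJ hcoercive hΦ.neg
    (r := -r) (fun z hz => hbarrier z (neg_inj.mp hz)) (neg_le_neg hz₀') hJz₀'
  rw [Pi.neg_apply, neg_lt_neg_iff] at hΦz₂
  obtain ⟨a, hmax, hac⟩ := exists_between (max_lt hJz₀ hJz₀')
  obtain ⟨ha₀, ha₀'⟩ := max_lt_iff.mp hmax
  obtain ⟨z₃, hcrit₃, hJz₃⟩ := exists_critical_point_of_mountain_pass hJ hJ' hderiv hcoercive hΦ
    hac hbarrier hΦz₁.le hΦz₂.le (by linarith) (by linarith)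
  refine ⟨z₁, z₂, z₃, eq_zero_of_isLocalMin hderiv hmin₁, eq_zero_of_isLocalMin hderiv hmin₂,
    hcrit₃, ?_, ?_, ?_⟩
  · rintro rfl
    linarith
  · rintro rfl
    linarith
  · rintro rfl
    linarith

end CriticalPoints

section RealAnalysis

lemma abs_le_of_mul_abs_rpow_le {a p y C : ℝ} (ha : 0 < a) (hp : 0 < p) (h : a * |y| ^ p ≤ C) :
    |y| ≤ (C / a) ^ (1 / p) := by
  have hy : 0 ≤ |y| ^ p := Real.rpow_nonneg (abs_nonneg y) p
  rw [one_div, Real.le_rpow_inv_iff_of_pos (abs_nonneg y) (div_nonneg (by nlinarith) ha.le) hp,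
    le_div_iff₀ ha]
  linarith

/-- Beyond `T` with `T ^ (p - α) = c / a` the term `a * N ^ p` wins; on `[0, T]` take
`K = c * T ^ α`. -/
lemma exists_mul_rpow_le_add {a c α p : ℝ} (ha : 0 < a) (hα : 0 ≤ α) (hαp : α < p) :
    ∃ K, ∀ N, 0 ≤ N → c * N ^ α ≤ a * N ^ p + K := by
  rcases le_or_gt c 0 with hc | hc
  · exact ⟨0, fun N hN => by
      nlinarith [Real.rpow_nonneg hN α, Real.rpow_nonneg hN p]⟩
  set T := (c / a) ^ (1 / (p - α))
  have hT : 0 < T := Real.rpow_pos_of_pos (div_pos hc ha) _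
  have hTpow : T ^ (p - α) = c / a := by
    rw [← Real.rpow_mul (div_pos hc ha).le, one_div_mul_cancel (by linarith), Real.rpow_one]
  refine ⟨c * T ^ α, fun N hN => ?_⟩
  rcases le_or_gt N T with hNT | hNT
  · nlinarith [Real.rpow_le_rpow hN hNT hα, Real.rpow_nonneg hN p]
  · have hNpos : 0 < N := hT.trans hNT
    have hsplit : N ^ p = N ^ (p - α) * N ^ α := by
      rw [← Real.rpow_add hNpos, sub_add_cancel]
    have hlarge : c / a ≤ N ^ (p - α) :=
      hTpow ▸ Real.rpow_le_rpow hT.le hNT.le (by linarith)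
    have hcT : 0 ≤ c * T ^ α := by positivity
    rw [div_le_iff₀ ha] at hlarge
    nlinarith [Real.rpow_nonneg hN α]

lemma rpow_lt_mul_rpow_of_mul_rpow_neg_lt {γ δ k p : ℝ} (hγ : 0 ≤ γ) (hk : 0 < k) (hp : 0 < p)
    (h : γ * k ^ (-(1 / p)) < δ) : γ ^ p < δ ^ p * k := by
  have hpow := Real.rpow_lt_rpow (by positivity) h hp
  rw [Real.mul_rpow hγ (by positivity), ← Real.rpow_mul hk.le, neg_mul, one_div_mul_cancel hp.ne',
    Real.rpow_neg_one] at hpow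
  calc γ ^ p = γ ^ p * k⁻¹ * k := by field_simp
    _ < δ ^ p * k := by gcongr

lemma hasDerivAt_sqrt_rpow {Q : ℝ → ℝ} {Q' t p : ℝ} (hp : 2 ≤ p) (hQ : ∀ s, 0 ≤ Q s)
    (hQ' : HasDerivAt Q Q' t) :
    HasDerivAt (fun s => √(Q s) ^ p) (p / 2 * √(Q t) ^ (p - 2) * Q') t := by
  have h := hQ'.rpow_const (p := p / 2) (Or.inr (by linarith))
  rw [show p / 2 - 1 = (p - 2) / 2 by ring] at h
  simp only [fun (r : ℝ) s => Real.rpow_div_two_eq_sqrt r (hQ s)] at h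
  convert h using 1
  ring

lemma hasDerivAt_abs_add_mul_rpow {p : ℝ} (hp : 2 ≤ p) (a b : ℝ) :
    HasDerivAt (fun s => |a + s * b| ^ p) (p * (|a| ^ (p - 2) * a * b)) 0 := by
  have hlin : HasDerivAt (fun s => a + s * b) b 0 := by
    simpa using ((hasDerivAt_id (0 : ℝ)).mul_const b).const_add a
  have h := hasDerivAt_sqrt_rpow hp (fun s => mul_self_nonneg (a + s * b)) (hlin.mul hlin)
  simp only [Real.sqrt_mul_self_eq_abs, zero_mul, add_zero] at h
  convert h using 1
  ring

variable {f fs ft : ℝ → ℝ → ℝ}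

lemma fderiv_eq_partials (hf : ContDiff ℝ 1 fun st : ℝ × ℝ => f st.1 st.2)
    (hfs : ∀ s t, HasDerivAt (fun z => f z t) (fs s t) s)
    (hft : ∀ s t, HasDerivAt (fun z => f s z) (ft s t) t) (P : ℝ × ℝ) :
    fderiv ℝ (fun st : ℝ × ℝ => f st.1 st.2) P =
      fs P.1 P.2 • ContinuousLinearMap.fst ℝ ℝ ℝ + ft P.1 P.2 • ContinuousLinearMap.snd ℝ ℝ ℝ := by
  have hd := (hf.differentiable one_ne_zero P).hasFDerivAt
  apply ContinuousLinearMap.prod_ext <;> apply ContinuousLinearMap.ext_ring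
  · have h1 := hd.comp_hasDerivAt_of_eq P.1
      ((hasDerivAt_id P.1).prodMk (hasDerivAt_const P.1 P.2)) rfl
    simpa using h1.unique (hfs P.1 P.2)
  · have h2 := hd.comp_hasDerivAt_of_eq P.2
      ((hasDerivAt_const P.2 P.1).prodMk (hasDerivAt_id P.2)) rfl
    simpa using h2.unique (hft P.1 P.2)

lemma hasDerivAt_comp_add_mul (hf : ContDiff ℝ 1 fun st : ℝ × ℝ => f st.1 st.2)
    (hfs : ∀ s t, HasDerivAt (fun z => f z t) (fs s t) s)
    (hft : ∀ s t, HasDerivAt (fun z => f s z) (ft s t) t) (a b c d : ℝ) :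
    HasDerivAt (fun s => f (a + s * c) (b + s * d)) (fs a b * c + ft a b * d) 0 := by
  have hd := (hf.differentiable one_ne_zero (a, b)).hasFDerivAt
  rw [fderiv_eq_partials hf hfs hft] at hd
  have hline : HasDerivAt (fun s : ℝ => (a + s * c, b + s * d)) (c, d) 0 := by
    have hfst : HasDerivAt (fun s : ℝ => a + s * c) c 0 := by
      simpa using ((hasDerivAt_id (0 : ℝ)).mul_const c).const_add a
    have hsnd : HasDerivAt (fun s : ℝ => b + s * d) d 0 := by
      simpa using ((hasDerivAt_id (0 : ℝ)).mul_const d).const_add b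
    exact hfst.prodMk hsnd
  exact (hd.comp_hasDerivAt_of_eq 0 hline (by simp)).congr_deriv (by simp [mul_comm])

lemma continuous_partial_fst (hf : ContDiff ℝ 1 fun st : ℝ × ℝ => f st.1 st.2)
    (hfs : ∀ s t, HasDerivAt (fun z => f z t) (fs s t) s)
    (hft : ∀ s t, HasDerivAt (fun z => f s z) (ft s t) t) :
    Continuous fun st : ℝ × ℝ => fs st.1 st.2 := by
  simpa [fderiv_eq_partials hf hfs hft] using
    (hf.continuous_fderiv one_ne_zero).clm_apply (continuous_const (y := ((1 : ℝ), (0 : ℝ))))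

lemma continuous_partial_snd (hf : ContDiff ℝ 1 fun st : ℝ × ℝ => f st.1 st.2)
    (hfs : ∀ s t, HasDerivAt (fun z => f z t) (fs s t) s)
    (hft : ∀ s t, HasDerivAt (fun z => f s z) (ft s t) t) :
    Continuous fun st : ℝ × ℝ => ft st.1 st.2 := by
  simpa [fderiv_eq_partials hf hfs hft] using
    (hf.continuous_fderiv one_ne_zero).clm_apply (continuous_const (y := ((0 : ℝ), (1 : ℝ))))

end RealAnalysis

lemma isCompact_of_abs_le {V : Type*} {S : Set ((V → ℝ) × (V → ℝ))} (hS : IsClosed S)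
    (R₁ R₂ : V → ℝ) (hR : ∀ z ∈ S, ∀ x, |z.1 x| ≤ R₁ x ∧ |z.2 x| ≤ R₂ x) : IsCompact S :=
  ((isCompact_univ_pi fun x => isCompact_Icc (a := -R₁ x) (b := R₁ x)).prod
    (isCompact_univ_pi fun x => isCompact_Icc (a := -R₂ x) (b := R₂ x))).of_isClosed_subset hS
    fun z hz => ⟨Set.mem_univ_pi.mpr fun x => abs_le.mp (hR z hz x).1,
      Set.mem_univ_pi.mpr fun x => abs_le.mp (hR z hz x).2⟩

lemma continuous_pair_apply {V : Type*} (x : V) :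
    Continuous fun z : (V → ℝ) × (V → ℝ) => (z.1 x, z.2 x) := by
  fun_prop

open Finset

variable {V : Type*} [Fintype V]

section GraphOperators

variable (w : V → V → ℝ) (μ : V → ℝ)

def glapLinear : Module.End ℝ (V → ℝ) where
  toFun := glap w μ
  map_add' f g := by
    ext x
    simp only [glap, Pi.add_apply, ← mul_add, ← sum_add_distrib]
    congr 1
    exact sum_congr rfl fun y _ => by ring
  map_smul' c f := by
    ext x
    simp only [glap, Pi.smul_apply, smul_eq_mul, RingHom.id_apply, mul_sum]
    exact sum_congr rfl fun y _ => by ring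

lemma iterate_glap (k : ℕ) : (glap w μ)^[k] = ⇑(glapLinear w μ ^ k) :=
  (Module.End.coe_pow (glapLinear w μ) k).symm

lemma continuous_iterate_glap (k : ℕ) : Continuous ((glap w μ)^[k]) := by
  rw [iterate_glap]
  exact LinearMap.continuous_of_finiteDimensional _

lemma iterate_glap_const {k : ℕ} (hk : k ≠ 0) (c : ℝ) : (glap w μ)^[k] (fun _ => c) = 0 := by
  obtain ⟨j, rfl⟩ := Nat.exists_eq_succ_of_ne_zero hk
  have hc : glap w μ (fun _ => c) = 0 := by ext x; simp [glap]
  rw [Function.iterate_succ_apply, hc, iterate_glap, map_zero]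

lemma ggam_add_right (f g₁ g₂ : V → ℝ) (x : V) :
    ggam w μ f (g₁ + g₂) x = ggam w μ f g₁ x + ggam w μ f g₂ x := by
  simp only [ggam, Pi.add_apply, ← mul_add, ← sum_add_distrib]
  congr 1
  exact sum_congr rfl fun y _ => by ring

lemma ggam_smul_right (f g : V → ℝ) (c : ℝ) (x : V) :
    ggam w μ f (c • g) x = c * ggam w μ f g x := by
  simp only [ggam, Pi.smul_apply, smul_eq_mul, mul_sum]
  exact sum_congr rfl fun y _ => by ring

lemma ggam_comm (f g : V → ℝ) (x : V) : ggam w μ f g x = ggam w μ g f x := by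
  simp only [ggam]
  congr 1
  exact sum_congr rfl fun y _ => by ring

lemma ggam_const_left (c : ℝ) (g : V → ℝ) (x : V) : ggam w μ (fun _ => c) g x = 0 := by
  simp [ggam]

lemma ggam_self_nonneg (hw : ∀ x y, 0 ≤ w x y) (hμ : ∀ x, 0 < μ x) (f : V → ℝ) (x : V) :
    0 ≤ ggam w μ f f x := by
  have := hμ x
  exact mul_nonneg (by positivity) (sum_nonneg fun y _ => by
    rw [mul_assoc]; exact mul_nonneg (hw x y) (mul_self_nonneg _))

def gradInner (m : ℕ) (u φ : V → ℝ) (x : V) : ℝ :=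
  if m % 2 = 1 then ggam w μ ((glap w μ)^[(m - 1) / 2] u) ((glap w μ)^[(m - 1) / 2] φ) x
  else (glap w μ)^[m / 2] u x * (glap w μ)^[m / 2] φ x

variable {w μ} (m : ℕ)

lemma gradm_eq_sqrt_gradInner (u : V → ℝ) (x : V) :
    gradm w μ m u x = √(gradInner w μ m u u x) := by
  unfold gradm gradInner gnorm
  split_ifs
  · rfl
  · exact (Real.sqrt_mul_self_eq_abs _).symm

lemma Bmp_eq_intV_gradInner (p : ℝ) (u φ : V → ℝ) :
    Bmp w μ m p u φ = intV μ (fun x => gradm w μ m u x ^ (p - 2) * gradInner w μ m u φ x) := by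
  unfold Bmp gradInner
  split_ifs
  · rfl
  · simp only [mul_assoc]

lemma gradInner_comm (u φ : V → ℝ) (x : V) : gradInner w μ m u φ x = gradInner w μ m φ u x := by
  unfold gradInner
  split_ifs
  · exact ggam_comm w μ _ _ x
  · exact mul_comm _ _

lemma gradInner_add_right (u φ ψ : V → ℝ) (x : V) :
    gradInner w μ m u (φ + ψ) x = gradInner w μ m u φ x + gradInner w μ m u ψ x := by
  unfold gradInner
  split_ifs
  · rw [iterate_glap, map_add, ggam_add_right]
  · rw [iterate_glap, map_add, Pi.add_apply, mul_add]

lemma gradInner_smul_right (u φ : V → ℝ) (c : ℝ) (x : V) :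
    gradInner w μ m u (c • φ) x = c * gradInner w μ m u φ x := by
  unfold gradInner
  split_ifs
  · rw [iterate_glap, map_smul, ggam_smul_right]
  · rw [iterate_glap, map_smul, Pi.smul_apply, smul_eq_mul]
    ring

lemma gradInner_add_smul_self (u φ : V → ℝ) (s : ℝ) (x : V) :
    gradInner w μ m (u + s • φ) (u + s • φ) x =
      gradInner w μ m u u x + 2 * s * gradInner w μ m u φ x + s ^ 2 * gradInner w μ m φ φ x := by
  have hleft : ∀ ψ, gradInner w μ m (u + s • φ) ψ x =
      gradInner w μ m u ψ x + s * gradInner w μ m φ ψ x := fun ψ => by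
    rw [gradInner_comm, gradInner_add_right, gradInner_smul_right, gradInner_comm m ψ,
      gradInner_comm m ψ]
  rw [hleft, gradInner_add_right, gradInner_smul_right, gradInner_add_right,
    gradInner_smul_right, gradInner_comm m φ u]
  ring

lemma gradInner_self_nonneg (hw : ∀ x y, 0 ≤ w x y) (hμ : ∀ x, 0 < μ x) (u : V → ℝ) (x : V) :
    0 ≤ gradInner w μ m u u x := by
  unfold gradInner
  split_ifs
  · exact ggam_self_nonneg w μ hw hμ _ x
  · exact mul_self_nonneg _

lemma gradm_const (hm : 1 ≤ m) (c : ℝ) (x : V) : gradm w μ m (fun _ => c) x = 0 := by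
  rw [gradm_eq_sqrt_gradInner, Real.sqrt_eq_zero']
  unfold gradInner
  split_ifs with hodd
  · rcases Nat.eq_zero_or_pos ((m - 1) / 2) with h0 | hpos
    · simp only [h0, Function.iterate_zero, id_eq, ggam_const_left, le_refl]
    · rw [iterate_glap_const w μ hpos.ne' c]
      exact (ggam_const_left w μ 0 _ x).le
  · rw [iterate_glap_const w μ (by omega) c]
    simp

lemma gradm_nonneg (u : V → ℝ) (x : V) : 0 ≤ gradm w μ m u x := by
  rw [gradm_eq_sqrt_gradInner]
  exact Real.sqrt_nonneg _

lemma continuous_gradInner (x : V) :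
    Continuous fun uφ : (V → ℝ) × (V → ℝ) => gradInner w μ m uφ.1 uφ.2 x := by
  have hL := continuous_iterate_glap w μ
  unfold gradInner ggam
  split_ifs
  · have := hL ((m - 1) / 2)
    fun_prop
  · have := hL (m / 2)
    fun_prop

end GraphOperators

lemma fmin_le [Nonempty V] (f : V → ℝ) (x : V) : fmin f ≤ f x :=
  inf'_le f (mem_univ x)

lemma fmin_pos [Nonempty V] {f : V → ℝ} (hf : ∀ x, 0 < f x) : 0 < fmin f :=
  (lt_inf'_iff _).mpr fun x _ => hf x

lemma intV_pos [Nonempty V] {μ h : V → ℝ} (hμ : ∀ x, 0 < μ x) (hh : ∀ x, 0 < h x) :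
    0 < intV μ h :=
  sum_pos (fun x _ => mul_pos (hμ x) (hh x)) univ_nonempty

section Energy

variable {w : V → V → ℝ} {μ : V → ℝ} (m : ℕ)

lemma hasDerivAt_gradm_rpow (hw : ∀ x y, 0 ≤ w x y) (hμ : ∀ x, 0 < μ x) {p : ℝ} (hp : 2 ≤ p)
    (u φ : V → ℝ) (x : V) :
    HasDerivAt (fun s : ℝ => gradm w μ m (u + s • φ) x ^ p)
      (p * (gradm w μ m u x ^ (p - 2) * gradInner w μ m u φ x)) 0 := by
  have hquad : HasDerivAt (fun s : ℝ => gradInner w μ m (u + s • φ) (u + s • φ) x)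
      (2 * gradInner w μ m u φ x) 0 := by
    simp only [gradInner_add_smul_self]
    have hlin : HasDerivAt (fun s : ℝ => 2 * s * gradInner w μ m u φ x)
        (2 * 1 * gradInner w μ m u φ x) 0 :=
      ((hasDerivAt_id (0 : ℝ)).const_mul 2).mul_const _
    have hsq : HasDerivAt (fun s : ℝ => s ^ 2 * gradInner w μ m φ φ x)
        ((2 : ℕ) * (0 : ℝ) ^ (2 - 1) * gradInner w μ m φ φ x) 0 :=
      (hasDerivAt_pow 2 (0 : ℝ)).mul_const _
    exact (((hasDerivAt_const 0 _).add hlin).add hsq).congr_deriv (by ring)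
  have h := hasDerivAt_sqrt_rpow hp (fun s => gradInner_self_nonneg m hw hμ _ x) hquad
  simp only [← gradm_eq_sqrt_gradInner, zero_smul, add_zero] at h
  convert h using 1
  ring

variable (w μ) (h : V → ℝ) (p : ℝ)

/-- `‖u‖_{W^{m,p}}^p / p`. -/
def energy (u : V → ℝ) : ℝ := 1 / p * intV μ (fun x => gradm w μ m u x ^ p + h x * |u x| ^ p)

/-- The left-hand side of the weak form of `𝓛_{m,p}u + h|u|^{p-2}u`. -/
def energyDeriv (u φ : V → ℝ) : ℝ :=
  Bmp w μ m p u φ + intV μ (fun x => h x * |u x| ^ (p - 2) * u x * φ x)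

variable {w μ h m p}

lemma hasDerivAt_energy (hw : ∀ x y, 0 ≤ w x y) (hμ : ∀ x, 0 < μ x) (hp : 2 ≤ p) (u φ : V → ℝ) :
    HasDerivAt (fun s : ℝ => energy w μ m h p (u + s • φ)) (energyDeriv w μ m h p u φ) 0 := by
  have hterm : ∀ x, HasDerivAt
      (fun s : ℝ => μ x * (gradm w μ m (u + s • φ) x ^ p + h x * |u x + s * φ x| ^ p))
      (μ x * (p * (gradm w μ m u x ^ (p - 2) * gradInner w μ m u φ x) +
        h x * (p * (|u x| ^ (p - 2) * u x * φ x)))) 0 := fun x =>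
    ((hasDerivAt_gradm_rpow m hw hμ hp u φ x).add
      ((hasDerivAt_abs_add_mul_rpow hp (u x) (φ x)).const_mul (h x))).const_mul (μ x)
  have hsum := (HasDerivAt.fun_sum (u := univ) fun x _ => hterm x).const_mul (1 / p)
  refine hsum.congr_deriv ?_
  simp only [energyDeriv, Bmp_eq_intV_gradInner, intV, mul_sum, ← sum_add_distrib]
  refine sum_congr rfl fun x _ => ?_
  field_simp

lemma energyDeriv_add_right (u φ ψ : V → ℝ) :
    energyDeriv w μ m h p u (φ + ψ) = energyDeriv w μ m h p u φ + energyDeriv w μ m h p u ψ := by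
  simp only [energyDeriv, Bmp_eq_intV_gradInner, intV, gradInner_add_right, Pi.add_apply,
    mul_add, sum_add_distrib]
  ring

lemma energyDeriv_smul_right (u φ : V → ℝ) (c : ℝ) :
    energyDeriv w μ m h p u (c • φ) = c * energyDeriv w μ m h p u φ := by
  simp only [energyDeriv, Bmp_eq_intV_gradInner, intV, gradInner_smul_right, Pi.smul_apply,
    smul_eq_mul, mul_add, mul_sum]
  congr 1 <;> exact sum_congr rfl fun x _ => by ring

lemma energyDeriv_zero_right (u : V → ℝ) : energyDeriv w μ m h p u 0 = 0 := by
  simpa using energyDeriv_smul_right (w := w) (μ := μ) (m := m) (h := h) (p := p) u 0 0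

lemma continuous_gradm (x : V) : Continuous fun u => gradm w μ m u x := by
  simp only [gradm_eq_sqrt_gradInner]
  exact ((continuous_gradInner m x).comp (continuous_id.prodMk continuous_id)).sqrt

lemma continuous_energy (hp : 0 ≤ p) : Continuous (energy w μ m h p) := by
  have hg : ∀ x, Continuous fun u => gradm w μ m u x := continuous_gradm
  unfold energy intV
  refine continuous_const.mul (continuous_finsetSum _ fun x _ => continuous_const.mul
    (((hg x).rpow_const fun _ => Or.inr hp).add (continuous_const.mul
      (((continuous_apply x).abs).rpow_const fun _ => Or.inr hp))))

lemma continuous_energyDeriv (hp : 2 ≤ p) (φ : V → ℝ) :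
    Continuous fun u => energyDeriv w μ m h p u φ := by
  have hg : ∀ x, Continuous fun u => gradm w μ m u x := continuous_gradm
  simp only [energyDeriv, Bmp_eq_intV_gradInner, intV]
  refine (continuous_finsetSum _ fun x _ => continuous_const.mul
    (((hg x).rpow_const fun _ => Or.inr (by linarith)).mul
      ((continuous_gradInner m x).comp (continuous_id.prodMk continuous_const)))).add
    (continuous_finsetSum _ fun x _ => continuous_const.mul
      (((continuous_const.mul
        ((continuous_apply x).abs.rpow_const fun _ => Or.inr (by linarith))).mul
          (continuous_apply x)).mul continuous_const))

lemma intV_le_energy (hμ : ∀ x, 0 < μ x) (hp : 0 < p) (u : V → ℝ) :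
    1 / p * intV μ (fun x => h x * |u x| ^ p) ≤ energy w μ m h p u := by
  unfold energy intV
  gcongr with x
  · exact (hμ x).le
  · exact le_add_of_nonneg_left (Real.rpow_nonneg (gradm_nonneg m u x) p)

lemma energy_nonneg (hμ : ∀ x, 0 < μ x) (hh : ∀ x, 0 < h x) (hp : 0 < p) (u : V → ℝ) :
    0 ≤ energy w μ m h p u :=
  le_trans (mul_nonneg (by positivity) (sum_nonneg fun x _ =>
    mul_nonneg (hμ x).le (mul_nonneg (hh x).le (Real.rpow_nonneg (abs_nonneg _) p))))
    (intV_le_energy hμ hp u)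

lemma abs_le_of_energy_le [Nonempty V] (hμ : ∀ x, 0 < μ x) (hh : ∀ x, 0 < h x) (hp : 0 < p)
    {u : V → ℝ} {r : ℝ} (hu : energy w μ m h p u ≤ r) (x : V) :
    |u x| ≤ (p * r) ^ (1 / p) / (fmin h ^ (1 / p) * fmin μ ^ (1 / p)) := by
  have hmin := mul_pos (fmin_pos hh) (fmin_pos hμ)
  have hux : 0 ≤ |u x| ^ p := Real.rpow_nonneg (abs_nonneg _) p
  have hsingle : μ x * (h x * |u x| ^ p) ≤ p * r :=
    calc μ x * (h x * |u x| ^ p) ≤ intV μ (fun y => h y * |u y| ^ p) :=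
          single_le_sum (f := fun y => μ y * (h y * |u y| ^ p)) (fun y _ => mul_nonneg (hμ y).le
            (mul_nonneg (hh y).le (Real.rpow_nonneg (abs_nonneg _) p))) (mem_univ x)
      _ = p * (1 / p * intV μ (fun y => h y * |u y| ^ p)) := by field_simp
      _ ≤ p * r := mul_le_mul_of_nonneg_left ((intV_le_energy hμ hp u).trans hu) hp.le
  have hmin_le : fmin h * fmin μ ≤ h x * μ x :=
    mul_le_mul (fmin_le h x) (fmin_le μ x) (fmin_pos hμ).le (hh x).le
  have hbound : fmin h * fmin μ * |u x| ^ p ≤ p * r := by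
    nlinarith [mul_le_mul_of_nonneg_right hmin_le hux]
  rw [← Real.mul_rpow (fmin_pos hh).le (fmin_pos hμ).le, ← Real.div_rpow (by nlinarith) hmin.le]
  exact abs_le_of_mul_abs_rpow_le hmin hp hbound

lemma energy_const (hm : 1 ≤ m) (hp : p ≠ 0) (c : ℝ) :
    energy w μ m h p (fun _ => c) = |c| ^ p / p * intV μ h := by
  simp only [energy, intV, gradm_const m hm, Real.zero_rpow hp, zero_add, mul_sum]
  exact sum_congr rfl fun x _ => by ring

end Energy

section Potential

variable (μ : V → ℝ)

def potential (F : V → ℝ → ℝ → ℝ) (z : (V → ℝ) × (V → ℝ)) : ℝ :=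
  intV μ fun x => F x (z.1 x) (z.2 x)

def potentialDeriv (Fs Ft : V → ℝ → ℝ → ℝ) (z ξ : (V → ℝ) × (V → ℝ)) : ℝ :=
  intV μ fun x => Fs x (z.1 x) (z.2 x) * ξ.1 x + Ft x (z.1 x) (z.2 x) * ξ.2 x

variable {μ} {F Fs Ft : V → ℝ → ℝ → ℝ}

lemma hasDerivAt_potential (hF0 : ∀ x, ContDiff ℝ 1 fun st : ℝ × ℝ => F x st.1 st.2)
    (hFs : ∀ x s t, HasDerivAt (fun z => F x z t) (Fs x s t) s)
    (hFt : ∀ x s t, HasDerivAt (fun z => F x s z) (Ft x s t) t) (z ξ : (V → ℝ) × (V → ℝ)) :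
    HasDerivAt (fun s : ℝ => potential μ F (z + s • ξ)) (potentialDeriv μ Fs Ft z ξ) 0 :=
  HasDerivAt.fun_sum (u := univ) fun x _ =>
    (hasDerivAt_comp_add_mul (hF0 x) (hFs x) (hFt x) _ _ _ _).const_mul (μ x)

lemma potentialDeriv_add_right (z ξ η : (V → ℝ) × (V → ℝ)) :
    potentialDeriv μ Fs Ft z (ξ + η) =
      potentialDeriv μ Fs Ft z ξ + potentialDeriv μ Fs Ft z η := by
  simp only [potentialDeriv, intV, Prod.fst_add, Prod.snd_add, Pi.add_apply, ← sum_add_distrib]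
  exact sum_congr rfl fun x _ => by ring

lemma potentialDeriv_smul_right (z ξ : (V → ℝ) × (V → ℝ)) (c : ℝ) :
    potentialDeriv μ Fs Ft z (c • ξ) = c * potentialDeriv μ Fs Ft z ξ := by
  simp only [potentialDeriv, intV, Prod.smul_fst, Prod.smul_snd, Pi.smul_apply, smul_eq_mul,
    mul_sum]
  exact sum_congr rfl fun x _ => by ring

lemma continuous_potential (hF0 : ∀ x, ContDiff ℝ 1 fun st : ℝ × ℝ => F x st.1 st.2) :
    Continuous (potential μ F) :=
  continuous_finsetSum _ fun x _ => continuous_const.mul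
    ((hF0 x).continuous.comp (continuous_pair_apply x))

lemma continuous_potentialDeriv (hF0 : ∀ x, ContDiff ℝ 1 fun st : ℝ × ℝ => F x st.1 st.2)
    (hFs : ∀ x s t, HasDerivAt (fun z => F x z t) (Fs x s t) s)
    (hFt : ∀ x s t, HasDerivAt (fun z => F x s z) (Ft x s t) t) (ξ : (V → ℝ) × (V → ℝ)) :
    Continuous fun z => potentialDeriv μ Fs Ft z ξ := by
  have hpair := continuous_pair_apply (V := V)
  exact continuous_finsetSum _ fun x _ => continuous_const.mul
    ((((continuous_partial_fst (hF0 x) (hFs x) (hFt x)).comp (hpair x)).mul continuous_const).add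
      (((continuous_partial_snd (hF0 x) (hFs x) (hFt x)).comp (hpair x)).mul continuous_const))

lemma bddAbove_image_box (hF : ∀ x, Continuous fun st : ℝ × ℝ => F x st.1 st.2) (A B : ℝ) :
    BddAbove {y : ℝ | ∃ x : V, ∃ s t : ℝ, |s| ≤ A ∧ |t| ≤ B ∧ y = F x s t} := by
  refine ((Set.finite_univ.bddAbove_biUnion (S := fun x : V =>
    (fun st : ℝ × ℝ => F x st.1 st.2) '' (Set.Icc (-A) A ×ˢ Set.Icc (-B) B))).mpr fun x _ =>
      (isCompact_Icc.prod isCompact_Icc).bddAbove_image (hF x).continuousOn).mono ?_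
  rintro _ ⟨x, s, t, hs, ht, rfl⟩
  exact Set.mem_biUnion (Set.mem_univ x) ⟨(s, t), ⟨abs_le.mp hs, abs_le.mp ht⟩, rfl⟩

end Potential

section System

variable (w : V → V → ℝ) (μ h₁ h₂ : V → ℝ) (m₁ m₂ : ℕ) (p q lam : ℝ)

def systemEnergy (z : (V → ℝ) × (V → ℝ)) : ℝ :=
  energy w μ m₁ h₁ p z.1 + energy w μ m₂ h₂ q z.2

/-- `J_λ = Φ - λΨ`, whose critical points solve the system. -/
def systemFunctional (F : V → ℝ → ℝ → ℝ) (z : (V → ℝ) × (V → ℝ)) : ℝ :=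
  systemEnergy w μ h₁ h₂ m₁ m₂ p q z - lam * potential μ F z

def systemDeriv (Fs Ft : V → ℝ → ℝ → ℝ) (z : (V → ℝ) × (V → ℝ)) :
    ((V → ℝ) × (V → ℝ)) →L[ℝ] ℝ :=
  LinearMap.toContinuousLinearMap
    { toFun := fun ξ => energyDeriv w μ m₁ h₁ p z.1 ξ.1 + energyDeriv w μ m₂ h₂ q z.2 ξ.2 -
        lam * potentialDeriv μ Fs Ft z ξ
      map_add' := fun ξ η => by
        simp only [Prod.fst_add, Prod.snd_add, energyDeriv_add_right, potentialDeriv_add_right]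
        ring
      map_smul' := fun c ξ => by
        simp only [Prod.smul_fst, Prod.smul_snd, energyDeriv_smul_right,
          potentialDeriv_smul_right, smul_eq_mul, RingHom.id_apply]
        ring }

variable {w μ h₁ h₂ m₁ m₂ p q lam} {F Fs Ft : V → ℝ → ℝ → ℝ}

lemma hasLineDerivAt_systemFunctional (hw : ∀ x y, 0 ≤ w x y) (hμ : ∀ x, 0 < μ x) (hp : 2 ≤ p)
    (hq : 2 ≤ q) (hF0 : ∀ x, ContDiff ℝ 1 fun st : ℝ × ℝ => F x st.1 st.2)
    (hFs : ∀ x s t, HasDerivAt (fun z => F x z t) (Fs x s t) s)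
    (hFt : ∀ x s t, HasDerivAt (fun z => F x s z) (Ft x s t) t) (z ξ : (V → ℝ) × (V → ℝ)) :
    HasLineDerivAt ℝ (systemFunctional w μ h₁ h₂ m₁ m₂ p q lam F)
      (systemDeriv w μ h₁ h₂ m₁ m₂ p q lam Fs Ft z ξ) z ξ :=
  ((hasDerivAt_energy hw hμ hp z.1 ξ.1).add (hasDerivAt_energy hw hμ hq z.2 ξ.2)).sub
    ((hasDerivAt_potential hF0 hFs hFt z ξ).const_mul lam)

lemma continuous_systemEnergy (hp : 0 ≤ p) (hq : 0 ≤ q) :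
    Continuous (systemEnergy w μ h₁ h₂ m₁ m₂ p q) :=
  ((continuous_energy hp).comp continuous_fst).add ((continuous_energy hq).comp continuous_snd)

lemma continuous_systemFunctional (hp : 0 ≤ p) (hq : 0 ≤ q)
    (hF0 : ∀ x, ContDiff ℝ 1 fun st : ℝ × ℝ => F x st.1 st.2) :
    Continuous (systemFunctional w μ h₁ h₂ m₁ m₂ p q lam F) :=
  (continuous_systemEnergy hp hq).sub (continuous_const.mul (continuous_potential hF0))

lemma continuous_systemDeriv (hp : 2 ≤ p) (hq : 2 ≤ q)
    (hF0 : ∀ x, ContDiff ℝ 1 fun st : ℝ × ℝ => F x st.1 st.2)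
    (hFs : ∀ x s t, HasDerivAt (fun z => F x z t) (Fs x s t) s)
    (hFt : ∀ x s t, HasDerivAt (fun z => F x s z) (Ft x s t) t) :
    Continuous (systemDeriv w μ h₁ h₂ m₁ m₂ p q lam Fs Ft) :=
  continuous_clm_apply.mpr fun ξ =>
    (((continuous_energyDeriv hp ξ.1).comp continuous_fst).add
      ((continuous_energyDeriv hq ξ.2).comp continuous_snd)).sub
    (continuous_const.mul (continuous_potentialDeriv hF0 hFs hFt ξ))

lemma isSolSys_of_systemDeriv_eq_zero {z : (V → ℝ) × (V → ℝ)}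
    (hz : systemDeriv w μ h₁ h₂ m₁ m₂ p q lam Fs Ft z = 0) :
    isSolSys w μ h₁ h₂ m₁ m₂ p q lam Fs Ft z.1 z.2 := by
  intro φ₁ φ₂
  have e₁ := congrArg (fun L => L (φ₁, 0)) hz
  have e₂ := congrArg (fun L => L (0, φ₂)) hz
  simp only [systemDeriv, LinearMap.coe_toContinuousLinearMap', LinearMap.coe_mk, AddHom.coe_mk,
    zero_apply, energyDeriv_zero_right, potentialDeriv, Pi.zero_apply,
    mul_zero, add_zero, zero_add] at e₁ e₂
  exact ⟨by unfold energyDeriv at e₁; linarith, by unfold energyDeriv at e₂; linarith⟩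

lemma exists_sum_le_systemFunctional (hμ : ∀ x, 0 < μ x) (hh₁ : ∀ x, 0 < h₁ x)
    (hh₂ : ∀ x, 0 < h₂ x) (hp : 0 < p) (hq : 0 < q) (hlam : 0 ≤ lam) {α β : ℝ} (hα0 : 0 ≤ α)
    (hαp : α < p) (hβ0 : 0 ≤ β) (hβq : β < q) {f₁ f₂ g : V → ℝ}
    (hF2 : ∀ x s t, F x s t ≤ f₁ x * |s| ^ α + f₂ x * |t| ^ β + g x) :
    ∃ C, ∀ z : (V → ℝ) × (V → ℝ),
      ∑ x, μ x * (h₁ x / (2 * p) * |z.1 x| ^ p + h₂ x / (2 * q) * |z.2 x| ^ q) - C ≤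
        systemFunctional w μ h₁ h₂ m₁ m₂ p q lam F z := by
  choose K₁ hK₁ using fun x =>
    exists_mul_rpow_le_add (c := lam * f₁ x) (by have := hh₁ x; positivity : 0 < h₁ x / (2 * p))
      hα0 hαp
  choose K₂ hK₂ using fun x =>
    exists_mul_rpow_le_add (c := lam * f₂ x) (by have := hh₂ x; positivity : 0 < h₂ x / (2 * q))
      hβ0 hβq
  refine ⟨∑ x, μ x * (K₁ x + K₂ x + lam * g x), fun z => ?_⟩
  have hE₁ := intV_le_energy (w := w) (m := m₁) (h := h₁) hμ hp z.1
  have hE₂ := intV_le_energy (w := w) (m := m₂) (h := h₂) hμ hq z.2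
  have hterm : ∀ x, μ x * (h₁ x / (2 * p) * |z.1 x| ^ p + h₂ x / (2 * q) * |z.2 x| ^ q) -
      μ x * (K₁ x + K₂ x + lam * g x) ≤
      1 / p * (μ x * (h₁ x * |z.1 x| ^ p)) + 1 / q * (μ x * (h₂ x * |z.2 x| ^ q)) -
        lam * (μ x * F x (z.1 x) (z.2 x)) := fun x => by
    have hF := mul_le_mul_of_nonneg_left (hF2 x (z.1 x) (z.2 x)) (mul_nonneg hlam (hμ x).le)
    have hK := mul_le_mul_of_nonneg_left
      (add_le_add (hK₁ x _ (abs_nonneg (z.1 x))) (hK₂ x _ (abs_nonneg (z.2 x)))) (hμ x).le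
    linear_combination hK + hF
  have hsum := sum_le_sum fun x (_ : x ∈ univ) => hterm x
  simp only [sum_sub_distrib, sum_add_distrib, ← mul_sum] at hsum
  unfold systemFunctional systemEnergy potential
  unfold intV at hE₁ hE₂ ⊢
  linarith

lemma isCompact_systemFunctional_sublevel (hμ : ∀ x, 0 < μ x) (hh₁ : ∀ x, 0 < h₁ x)
    (hh₂ : ∀ x, 0 < h₂ x) (hp : 0 < p) (hq : 0 < q) (hlam : 0 ≤ lam)
    (hF0 : ∀ x, ContDiff ℝ 1 fun st : ℝ × ℝ => F x st.1 st.2) {α β : ℝ} (hα0 : 0 ≤ α)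
    (hαp : α < p) (hβ0 : 0 ≤ β) (hβq : β < q) {f₁ f₂ g : V → ℝ}
    (hF2 : ∀ x s t, F x s t ≤ f₁ x * |s| ^ α + f₂ x * |t| ^ β + g x) (b : ℝ) :
    IsCompact {z | systemFunctional w μ h₁ h₂ m₁ m₂ p q lam F z ≤ b} := by
  obtain ⟨C, hC⟩ := exists_sum_le_systemFunctional (w := w) (m₁ := m₁) (m₂ := m₂) hμ hh₁ hh₂ hp hq
    hlam hα0 hαp hβ0 hβq hF2
  refine isCompact_of_abs_le (isClosed_le (continuous_systemFunctional hp.le hq.le hF0)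
    continuous_const) (fun x => ((b + C) / (μ x * (h₁ x / (2 * p)))) ^ (1 / p))
    (fun x => ((b + C) / (μ x * (h₂ x / (2 * q)))) ^ (1 / q)) fun z hz x => ?_
  have hz : systemFunctional w μ h₁ h₂ m₁ m₂ p q lam F z ≤ b := hz
  have hnonneg : ∀ y ∈ univ,
      0 ≤ μ y * (h₁ y / (2 * p) * |z.1 y| ^ p + h₂ y / (2 * q) * |z.2 y| ^ q) := fun y _ => by
    have := hμ y
    have := hh₁ y
    have := hh₂ y
    positivity
  have hsingle := single_le_sum hnonneg (mem_univ x)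
  have hμx := hμ x
  have hh₁x := hh₁ x
  have hh₂x := hh₂ x
  have hx₁ : 0 ≤ μ x * (h₁ x / (2 * p) * |z.1 x| ^ p) := by positivity
  have hx₂ : 0 ≤ μ x * (h₂ x / (2 * q) * |z.2 x| ^ q) := by positivity
  have := hC z
  exact ⟨abs_le_of_mul_abs_rpow_le (by positivity) hp (by nlinarith),
    abs_le_of_mul_abs_rpow_le (by positivity) hq (by nlinarith)⟩

lemma le_systemFunctional_of_systemEnergy_eq [Nonempty V] (hμ : ∀ x, 0 < μ x)
    (hh₁ : ∀ x, 0 < h₁ x) (hh₂ : ∀ x, 0 < h₂ x) (hp : 0 < p) (hq : 0 < q) (hlam : 0 ≤ lam)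
    {r M : ℝ} (hM : ∀ x s t, |s| ≤ (p * r) ^ (1 / p) / (fmin h₁ ^ (1 / p) * fmin μ ^ (1 / p)) →
      |t| ≤ (q * r) ^ (1 / q) / (fmin h₂ ^ (1 / q) * fmin μ ^ (1 / q)) → F x s t ≤ M)
    {z : (V → ℝ) × (V → ℝ)} (hz : systemEnergy w μ h₁ h₂ m₁ m₂ p q z = r) :
    r - lam * (M * ∑ x, μ x) ≤ systemFunctional w μ h₁ h₂ m₁ m₂ p q lam F z := by
  have hE₁ := energy_nonneg (w := w) (m := m₁) hμ hh₁ hp z.1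
  have hE₂ := energy_nonneg (w := w) (m := m₂) hμ hh₂ hq z.2
  have hsplit : energy w μ m₁ h₁ p z.1 + energy w μ m₂ h₂ q z.2 = r := hz
  have hΨ : potential μ F z ≤ M * ∑ x, μ x := by
    rw [mul_sum]
    exact sum_le_sum fun x _ => by
      rw [mul_comm M]
      exact mul_le_mul_of_nonneg_left (hM x _ _ (abs_le_of_energy_le hμ hh₁ hp (by linarith) x)
        (abs_le_of_energy_le hμ hh₂ hq (by linarith) x)) (hμ x).le
  unfold systemFunctional
  rw [hz]
  linarith [mul_le_mul_of_nonneg_left hΨ hlam]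

lemma systemEnergy_const (hm₁ : 1 ≤ m₁) (hm₂ : 1 ≤ m₂) (hp : p ≠ 0) (hq : q ≠ 0) {δ₁ δ₂ : ℝ}
    (hδ₁ : 0 ≤ δ₁) (hδ₂ : 0 ≤ δ₂) :
    systemEnergy w μ h₁ h₂ m₁ m₂ p q (fun _ => δ₁, fun _ => δ₂) =
      δ₁ ^ p / p * intV μ h₁ + δ₂ ^ q / q * intV μ h₂ := by
  simp only [systemEnergy, energy_const hm₁ hp, energy_const hm₂ hq, abs_of_nonneg hδ₁,
    abs_of_nonneg hδ₂]

lemma systemEnergy_zero (hm₁ : 1 ≤ m₁) (hm₂ : 1 ≤ m₂) (hp : p ≠ 0) (hq : q ≠ 0) :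
    systemEnergy w μ h₁ h₂ m₁ m₂ p q 0 = 0 := by
  rw [show (0 : (V → ℝ) × (V → ℝ)) = (fun _ => 0, fun _ => 0) from rfl,
    systemEnergy_const hm₁ hm₂ hp hq le_rfl le_rfl, Real.zero_rpow hp, Real.zero_rpow hq]
  ring

lemma fmin_mul_sum_le_potential_const [Nonempty V] (hμ : ∀ x, 0 < μ x) (δ₁ δ₂ : ℝ) :
    fmin (fun x => F x δ₁ δ₂) * ∑ x, μ x ≤ potential μ F (fun _ => δ₁, fun _ => δ₂) := by
  rw [mul_sum]
  exact sum_le_sum fun x _ => by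
    rw [mul_comm]
    exact mul_le_mul_of_nonneg_left (fmin_le (fun x => F x δ₁ δ₂) x) (hμ x).le

lemma mul_one_sub_le_systemFunctional [Nonempty V] (hμ : ∀ x, 0 < μ x) (hh₁ : ∀ x, 0 < h₁ x)
    (hh₂ : ∀ x, 0 < h₂ x) (hp : 0 < p) (hq : 0 < q) (hlam : 0 ≤ lam)
    (hF : ∀ x, Continuous fun st : ℝ × ℝ => F x st.1 st.2) {r Λ : ℝ} (hr : r ≠ 0)
    (hΛ : Λ = r⁻¹ * sSup {y : ℝ | ∃ x : V, ∃ s t : ℝ,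
      |s| ≤ (p * r) ^ (1 / p) / ((fmin h₁) ^ (1 / p) * (fmin μ) ^ (1 / p)) ∧
      |t| ≤ (q * r) ^ (1 / q) / ((fmin h₂) ^ (1 / q) * (fmin μ) ^ (1 / q)) ∧ y = F x s t} *
        (∑ x, μ x))
    {z : (V → ℝ) × (V → ℝ)} (hz : systemEnergy w μ h₁ h₂ m₁ m₂ p q z = r) :
    r * (1 - lam * Λ) ≤ systemFunctional w μ h₁ h₂ m₁ m₂ p q lam F z := by
  have hbound := le_systemFunctional_of_systemEnergy_eq hμ hh₁ hh₂ hp hq hlam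
    (fun x s t hs ht => le_csSup (bddAbove_image_box hF _ _) ⟨x, s, t, hs, ht, rfl⟩) hz
  calc r * (1 - lam * Λ) = _ := by rw [hΛ]; field_simp
    _ ≤ _ := hbound

lemma lt_systemEnergy_const [Nonempty V] (hμ : ∀ x, 0 < μ x) (hh₁ : ∀ x, 0 < h₁ x)
    (hh₂ : ∀ x, 0 < h₂ x) (hm₁ : 1 ≤ m₁) (hm₂ : 1 ≤ m₂) (hp : 0 < p) (hq : 0 < q)
    {γ₁ γ₂ δ₁ δ₂ : ℝ} (hγ₁ : 0 ≤ γ₁) (hγ₂ : 0 ≤ γ₂) (hδ₁ : 0 ≤ δ₁) (hδ₂ : 0 ≤ δ₂)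
    (hκ₁ : γ₁ * ((1 / p) * intV μ h₁) ^ (-(1 / p)) < δ₁)
    (hκ₂ : γ₂ * ((1 / q) * intV μ h₂) ^ (-(1 / q)) < δ₂) :
    γ₁ ^ p + γ₂ ^ q < systemEnergy w μ h₁ h₂ m₁ m₂ p q (fun _ => δ₁, fun _ => δ₂) := by
  have hγδ₁ := rpow_lt_mul_rpow_of_mul_rpow_neg_lt hγ₁
    (mul_pos (one_div_pos.mpr hp) (intV_pos hμ hh₁)) hp hκ₁
  have hγδ₂ := rpow_lt_mul_rpow_of_mul_rpow_neg_lt hγ₂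
    (mul_pos (one_div_pos.mpr hq) (intV_pos hμ hh₂)) hq hκ₂
  rw [systemEnergy_const hm₁ hm₂ hp.ne' hq.ne' hδ₁ hδ₂]
  linarith [show δ₁ ^ p / p * intV μ h₁ = δ₁ ^ p * (1 / p * intV μ h₁) by ring,
    show δ₂ ^ q / q * intV μ h₂ = δ₂ ^ q * (1 / q * intV μ h₂) by ring]

lemma systemFunctional_const_neg [Nonempty V] (hμ : ∀ x, 0 < μ x) (hh₁ : ∀ x, 0 < h₁ x)
    (hh₂ : ∀ x, 0 < h₂ x) (hm₁ : 1 ≤ m₁) (hm₂ : 1 ≤ m₂) (hp : 0 < p) (hq : 0 < q) (hlam : 0 ≤ lam)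
    {δ₁ δ₂ Λ : ℝ} (hδ₁ : 0 < δ₁) (hδ₂ : 0 < δ₂)
    (hΛ : Λ = fmin (fun x => F x δ₁ δ₂) * (∑ x, μ x) /
      ((δ₁ ^ p / p) * intV μ h₁ + (δ₂ ^ q / q) * intV μ h₂)) (hlamΛ : 1 < lam * Λ) :
    systemFunctional w μ h₁ h₂ m₁ m₂ p q lam F (fun _ => δ₁, fun _ => δ₂) < 0 := by
  have hD : 0 < (δ₁ ^ p / p) * intV μ h₁ + (δ₂ ^ q / q) * intV μ h₂ := by
    have := intV_pos hμ hh₁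
    have := intV_pos hμ hh₂
    positivity
  have hΨ := mul_le_mul_of_nonneg_left (fmin_mul_sum_le_potential_const (F := F) hμ δ₁ δ₂) hlam
  rw [← div_mul_cancel₀ (fmin (fun x => F x δ₁ δ₂) * ∑ x, μ x) hD.ne', ← hΛ] at hΨ
  unfold systemFunctional
  rw [systemEnergy_const hm₁ hm₂ hp.ne' hq.ne' hδ₁.le hδ₂.le]
  nlinarith

lemma systemFunctional_zero (hm₁ : 1 ≤ m₁) (hm₂ : 1 ≤ m₂) (hp : p ≠ 0) (hq : q ≠ 0)
    (hF : intV μ (fun x => F x 0 0) = 0) : systemFunctional w μ h₁ h₂ m₁ m₂ p q lam F 0 = 0 := by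
  simp [systemFunctional, systemEnergy_zero hm₁ hm₂ hp hq, potential, hF]

end System

end PolyLaplacianSystem

end

open PolyLaplacianSystem in
theorem stmt0_general {V : Type*} [Fintype V] [Nonempty V]
    (w : V → V → ℝ) (μ : V → ℝ)
    (hw_nonneg : ∀ x y, 0 ≤ w x y) (hμ : ∀ x, 0 < μ x)
    (m1 m2 : ℕ) (hm1 : 1 ≤ m1) (hm2 : 1 ≤ m2)
    (p q : ℝ) (hp : 2 ≤ p) (hq : 2 ≤ q)
    (h1 h2 : V → ℝ) (hh1 : ∀ x, 0 < h1 x) (hh2 : ∀ x, 0 < h2 x)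
    (F Fs Ft : V → ℝ → ℝ → ℝ)
    -- (F0): F continuously differentiable in (s,t), with partial derivatives Fs, Ft
    (hF0 : ∀ x, ContDiff ℝ 1 (fun st : ℝ × ℝ => F x st.1 st.2))
    (hFs : ∀ x s t, HasDerivAt (fun z => F x z t) (Fs x s t) s)
    (hFt : ∀ x s t, HasDerivAt (fun z => F x s z) (Ft x s t) t)
    -- (F1)
    (hF1 : intV μ (fun x => F x 0 0) = 0)
    -- (F2)
    (α β : ℝ) (hα0 : 0 ≤ α) (hαp : α < p) (hβ0 : 0 ≤ β) (hβq : β < q)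
    (f1 f2 g : V → ℝ)
    (hF2 : ∀ x s t, F x s t ≤ f1 x * |s| ^ α + f2 x * |t| ^ β + g x)
    -- (F3)
    (γ1 γ2 δ1 δ2 : ℝ) (hγ1 : 0 < γ1) (hγ2 : 0 < γ2) (hδ1 : 0 < δ1) (hδ2 : 0 < δ2)
    (hδκ1 : δ1 > γ1 * ((1 / p) * intV μ h1) ^ (-(1 / p)))
    (hδκ2 : δ2 > γ2 * ((1 / q) * intV μ h2) ^ (-(1 / q)))
    (Λ1 Λ2 : ℝ)
    (hΛ1 : Λ1 = (γ1 ^ p + γ2 ^ q)⁻¹ *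
        sSup {z : ℝ | ∃ x : V, ∃ s t : ℝ,
          |s| ≤ (p * (γ1 ^ p + γ2 ^ q)) ^ (1 / p) /
                  ((fmin h1) ^ (1 / p) * (fmin μ) ^ (1 / p)) ∧
          |t| ≤ (q * (γ1 ^ p + γ2 ^ q)) ^ (1 / q) /
                  ((fmin h2) ^ (1 / q) * (fmin μ) ^ (1 / q)) ∧
          z = F x s t} * (∑ x, μ x))
    (hΛ2 : Λ2 = fmin (fun x => F x δ1 δ2) * (∑ x, μ x) /
        ((δ1 ^ p / p) * intV μ h1 + (δ2 ^ q / q) * intV μ h2))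
    (lam : ℝ) (hlam : 0 < lam) (hlamΛ2 : 1 < lam * Λ2) (hlamΛ1 : lam * Λ1 < 1) :
    ∃ u1 v1 u2 v2 u3 v3 : V → ℝ,
      isSolSys w μ h1 h2 m1 m2 p q lam Fs Ft u1 v1 ∧
      isSolSys w μ h1 h2 m1 m2 p q lam Fs Ft u2 v2 ∧
      isSolSys w μ h1 h2 m1 m2 p q lam Fs Ft u3 v3 ∧
      (u1, v1) ≠ (u2, v2) ∧ (u1, v1) ≠ (u3, v3) ∧ (u2, v2) ≠ (u3, v3) := by
  have hp0 : 0 < p := by linarith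
  have hq0 : 0 < q := by linarith
  have hr : 0 < γ1 ^ p + γ2 ^ q := by positivity
  have hc : 0 < (γ1 ^ p + γ2 ^ q) * (1 - lam * Λ1) := mul_pos hr (by linarith)
  obtain ⟨z1, z2, z3, hz1, hz2, hz3, h12, h13, h23⟩ := exists_three_critical_points
    (continuous_systemFunctional hp0.le hq0.le hF0) (continuous_systemDeriv hp hq hF0 hFs hFt)
    (hasLineDerivAt_systemFunctional hw_nonneg hμ hp hq hF0 hFs hFt)
    (isCompact_systemFunctional_sublevel hμ hh1 hh2 hp0 hq0 hlam.le hF0 hα0 hαp hβ0 hβq hF2)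
    (continuous_systemEnergy hp0.le hq0.le)
    (fun z hz => mul_one_sub_le_systemFunctional hμ hh1 hh2 hp0 hq0 hlam.le
      (fun x => (hF0 x).continuous) hr.ne' hΛ1 hz)
    (z₀ := 0) (by rw [systemEnergy_zero hm1 hm2 hp0.ne' hq0.ne']; exact hr.le)
    (by rwa [systemFunctional_zero hm1 hm2 hp0.ne' hq0.ne' hF1])
    (lt_systemEnergy_const hμ hh1 hh2 hm1 hm2 hp0 hq0 hγ1.le hγ2.le hδ1.le hδ2.le hδκ1 hδκ2).le
    ((systemFunctional_const_neg hμ hh1 hh2 hm1 hm2 hp0 hq0 hlam.le hδ1 hδ2 hΛ2 hlamΛ2).trans hc)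
  exact ⟨z1.1, z1.2, z2.1, z2.2, z3.1, z3.2, isSolSys_of_systemDeriv_eq_zero hz1,
    isSolSys_of_systemDeriv_eq_zero hz2, isSolSys_of_systemDeriv_eq_zero hz3,
    by simpa using h12, by simpa using h13, by simpa using h23⟩

/-- Theorem 1.1: three distinct solutions for the poly-Laplacian system on a finite graph. -/
theorem stmt0 {V : Type*} [Fintype V] [Nonempty V]
    (w : V → V → ℝ) (μ : V → ℝ)
    (hw_symm : ∀ x y, w x y = w y x) (hw_nonneg : ∀ x y, 0 ≤ w x y)
    (hw_diag : ∀ x, w x x = 0) (hμ : ∀ x, 0 < μ x)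
    (m1 m2 : ℕ) (hm1 : 1 ≤ m1) (hm2 : 1 ≤ m2)
    (p q : ℝ) (hp : 2 ≤ p) (hq : 2 ≤ q)
    (h1 h2 : V → ℝ) (hh1 : ∀ x, 0 < h1 x) (hh2 : ∀ x, 0 < h2 x)
    (F Fs Ft : V → ℝ → ℝ → ℝ)
    -- (F0): F continuously differentiable in (s,t), with partial derivatives Fs, Ft
    (hF0 : ∀ x, ContDiff ℝ 1 (fun st : ℝ × ℝ => F x st.1 st.2))
    (hFs : ∀ x s t, HasDerivAt (fun z => F x z t) (Fs x s t) s)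
    (hFt : ∀ x s t, HasDerivAt (fun z => F x s z) (Ft x s t) t)
    -- (F1)
    (hF1 : intV μ (fun x => F x 0 0) = 0)
    -- (F2)
    (α β : ℝ) (hα0 : 0 ≤ α) (hαp : α < p) (hβ0 : 0 ≤ β) (hβq : β < q)
    (f1 f2 g : V → ℝ)
    (hF2 : ∀ x s t, F x s t ≤ f1 x * |s| ^ α + f2 x * |t| ^ β + g x)
    -- (F3)
    (γ1 γ2 δ1 δ2 : ℝ) (hγ1 : 0 < γ1) (hγ2 : 0 < γ2) (hδ1 : 0 < δ1) (hδ2 : 0 < δ2)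
    (hδκ1 : δ1 > γ1 * ((1 / p) * intV μ h1) ^ (-(1 / p)))
    (hδκ2 : δ2 > γ2 * ((1 / q) * intV μ h2) ^ (-(1 / q)))
    (Λ1 Λ2 : ℝ)
    (hΛ1 : Λ1 = (γ1 ^ p + γ2 ^ q)⁻¹ *
        sSup {z : ℝ | ∃ x : V, ∃ s t : ℝ,
          |s| ≤ (p * (γ1 ^ p + γ2 ^ q)) ^ (1 / p) /
                  ((fmin h1) ^ (1 / p) * (fmin μ) ^ (1 / p)) ∧
          |t| ≤ (q * (γ1 ^ p + γ2 ^ q)) ^ (1 / q) /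
                  ((fmin h2) ^ (1 / q) * (fmin μ) ^ (1 / q)) ∧
          z = F x s t} * (∑ x, μ x))
    (hΛ2 : Λ2 = fmin (fun x => F x δ1 δ2) * (∑ x, μ x) /
        ((δ1 ^ p / p) * intV μ h1 + (δ2 ^ q / q) * intV μ h2))
    (hF3 : Λ1 < Λ2)
    (lam : ℝ) (hlam : 0 < lam) (hlamΛ2 : 1 < lam * Λ2) (hlamΛ1 : lam * Λ1 < 1) :
    ∃ u1 v1 u2 v2 u3 v3 : V → ℝ,
      isSolSys w μ h1 h2 m1 m2 p q lam Fs Ft u1 v1 ∧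
      isSolSys w μ h1 h2 m1 m2 p q lam Fs Ft u2 v2 ∧
      isSolSys w μ h1 h2 m1 m2 p q lam Fs Ft u3 v3 ∧
      (u1, v1) ≠ (u2, v2) ∧ (u1, v1) ≠ (u3, v3) ∧ (u2, v2) ≠ (u3, v3) :=
  stmt0_general w μ hw_nonneg hμ m1 m2 hm1 hm2 p q hp hq h1 h2 hh1 hh2 F Fs Ft hF0 hFs hFt hF1 α β
    hα0 hαp hβ0 hβq f1 f2 g hF2 γ1 γ2 δ1 δ2 hγ1 hγ2 hδ1 hδ2 hδκ1 hδκ2 Λ1 Λ2 hΛ1 hΛ2 lam hlam hlamΛ2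
    hlamΛ1
end

section
/- (Lemma 3.2) Let G=(V,E) be a finite graph, m1,m2≥1 integers, p,q≥2, h1,h2:V→(0,∞), and F:V×ℝ²→ℝ with (s,t)↦F(x,s,t) continuous for every x∈V. Suppose condition (F3) holds: there exist γ1,γ2,δ1,δ2>0 with δ1>γ1κ1 and δ2>γ2κ2, where κ1=((1/p)∫_V h1 dμ)^{−1/p} and κ2=((1/q)∫_V h2 dμ)^{−1/q}, such that (γ1^p+γ2^q)^{−1}·(max{F(x,s,t) : x∈V, |s| ≤ (p(γ1^p+γ2^q))^{1/p}/(h_{1,min}^{1/p}μ_min^{1/p}), |t| ≤ (q(γ1^p+γ2^q))^{1/q}/(h_{2,min}^{1/q}μ_min^{1/q})})·|V| < (min_{x∈V}F(x,δ1,δ2))·|V|/((δ1^p/p)∫_V h1 dμ + (δ2^q/q)∫_V h2 dμ). Then the constant functions u_{δ1}≡δ1, v_{δ2}≡δ2 satisfy Φ(u_{δ1},v_{δ2}) = (δ1^p/p)∫_V h1 dμ + (δ2^q/q)∫_V h2 dμ ≥ γ1^p+γ2^q and sup{Ψ(u,v) : Φ(u,v) ≤ γ1^p+γ2^q}/(γ1^p+γ2^q)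 < Ψ(u_{δ1},v_{δ2})/Φ(u_{δ1},v_{δ2}). -/
open Real

noncomputable section
variable {V : Type*}

/-- The functional Φ. -/
def PhiF [Fintype V] (w : V → V → ℝ) (μ h1 h2 : V → ℝ) (m1 m2 : ℕ) (p q : ℝ)
    (u v : V → ℝ) : ℝ :=
  (1 / p) * wnorm w μ h1 m1 p u ^ p + (1 / q) * wnorm w μ h2 m2 q v ^ q

/-- The functional Ψ. -/
def PsiF [Fintype V] (μ : V → ℝ) (F : V → ℝ → ℝ → ℝ) (u v : V → ℝ) : ℝ :=
  intV μ (fun x => F x (u x) (v x))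

end

/-! Constant functions have vanishing gradients of every order `m ≥ 1`, so `Φ(δ₁, δ₂)` is
`(δ₁^p/p)∫h₁ + (δ₂^q/q)∫h₂`, and the choice `δᵢ > γᵢκᵢ` makes this at least `γ₁^p + γ₂^q`.
Conversely `Φ(u, v) ≤ c` forces `μ_min h_min |u(x)|^p ≤ p c` at every vertex, so every such
`(u, v)` takes values in the box of (F3), and `Ψ(u, v) ≤ |V| · max_box F`; on the other side
`Ψ(δ₁, δ₂) ≥ |V| · min_x F(x, δ₁, δ₂)`. Condition (F3) compares exactly these two bounds. -/

section

variable {V : Type*} [Fintype V]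

lemma glap_const (w : V → V → ℝ) (μ : V → ℝ) (c : ℝ) :
    glap w μ (fun _ => c) = fun _ => 0 := by
  funext x
  simp [glap]

lemma iterate_glap_const (w : V → V → ℝ) (μ : V → ℝ) (c : ℝ) (k : ℕ) :
    ∃ c', (glap w μ)^[k] (fun _ => c) = fun _ => c' := by
  cases k with
  | zero => exact ⟨c, rfl⟩
  | succ k =>
    refine ⟨0, ?_⟩
    rw [Function.iterate_succ_apply, glap_const, Function.iterate_fixed (glap_const w μ 0)]

lemma gnorm_const (w : V → V → ℝ) (μ : V → ℝ) (c : ℝ) (x : V) :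
    gnorm w μ (fun _ => c) x = 0 := by
  simp [gnorm, ggam]

lemma gradm_const (w : V → V → ℝ) (μ : V → ℝ) {m : ℕ} (hm : 1 ≤ m) (c : ℝ) (x : V) :
    gradm w μ m (fun _ => c) x = 0 := by
  unfold gradm
  split_ifs with hodd
  · obtain ⟨c', hc'⟩ := iterate_glap_const w μ c ((m - 1) / 2)
    rw [hc', gnorm_const]
  · obtain ⟨j, hj⟩ : ∃ j, m / 2 = j + 1 := ⟨m / 2 - 1, by omega⟩
    obtain ⟨c', hc'⟩ := iterate_glap_const w μ c j
    rw [hj, Function.iterate_succ_apply', hc', glap_const, abs_zero]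

lemma gradm_nonneg (w : V → V → ℝ) (μ : V → ℝ) (m : ℕ) (u : V → ℝ) (x : V) :
    0 ≤ gradm w μ m u x := by
  unfold gradm
  split_ifs
  · exact Real.sqrt_nonneg _
  · exact abs_nonneg _

lemma intV_nonneg {μ u : V → ℝ} (hμ : ∀ x, 0 ≤ μ x) (hu : ∀ x, 0 ≤ u x) :
    0 ≤ intV μ u :=
  Finset.sum_nonneg fun x _ => mul_nonneg (hμ x) (hu x)

lemma intV_le_mul_sum {μ f : V → ℝ} {M : ℝ} (hμ : ∀ x, 0 ≤ μ x) (hf : ∀ x, f x ≤ M) :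
    intV μ f ≤ M * ∑ x, μ x := by
  rw [mul_comm, Finset.sum_mul]
  exact Finset.sum_le_sum fun x _ => mul_le_mul_of_nonneg_left (hf x) (hμ x)

lemma mul_sum_le_intV {μ f : V → ℝ} {M : ℝ} (hμ : ∀ x, 0 ≤ μ x) (hf : ∀ x, M ≤ f x) :
    M * ∑ x, μ x ≤ intV μ f := by
  rw [mul_comm, Finset.sum_mul]
  exact Finset.sum_le_sum fun x _ => mul_le_mul_of_nonneg_left (hf x) (hμ x)

section Sobolev

variable (w : V → V → ℝ) {μ h : V → ℝ} (m : ℕ) {l : ℝ}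

lemma sobolev_integrand_nonneg (hh : ∀ x, 0 ≤ h x) (u : V → ℝ) (x : V) :
    0 ≤ gradm w μ m u x ^ l + h x * |u x| ^ l :=
  add_nonneg (Real.rpow_nonneg (gradm_nonneg w μ m u x) l)
    (mul_nonneg (hh x) (Real.rpow_nonneg (abs_nonneg _) l))

lemma wnorm_nonneg (hμ : ∀ x, 0 ≤ μ x) (hh : ∀ x, 0 ≤ h x) (u : V → ℝ) :
    0 ≤ wnorm w μ h m l u :=
  Real.rpow_nonneg (intV_nonneg hμ (sobolev_integrand_nonneg w m hh u)) _

lemma wnorm_rpow (hl : 0 < l) (hμ : ∀ x, 0 ≤ μ x) (hh : ∀ x, 0 ≤ h x) (u : V → ℝ) :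
    wnorm w μ h m l u ^ l = intV μ (fun x => gradm w μ m u x ^ l + h x * |u x| ^ l) := by
  rw [wnorm, ← Real.rpow_mul (intV_nonneg hμ (sobolev_integrand_nonneg w m hh u)),
    one_div_mul_cancel hl.ne', Real.rpow_one]

lemma wnorm_const_rpow (hm : 1 ≤ m) (hl : 0 < l) (hμ : ∀ x, 0 ≤ μ x) (hh : ∀ x, 0 ≤ h x)
    (c : ℝ) : wnorm w μ h m l (fun _ => c) ^ l = |c| ^ l * intV μ h := by
  rw [wnorm_rpow w m hl hμ hh, intV, intV, Finset.mul_sum]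
  refine Finset.sum_congr rfl fun x _ => ?_
  rw [gradm_const w μ hm, Real.zero_rpow hl.ne']
  ring

lemma mul_mul_abs_rpow_le_wnorm_rpow (hl : 0 < l) (hμ : ∀ x, 0 ≤ μ x) (hh : ∀ x, 0 ≤ h x)
    (u : V → ℝ) (x : V) : μ x * (h x * |u x| ^ l) ≤ wnorm w μ h m l u ^ l := by
  rw [wnorm_rpow w m hl hμ hh]
  calc μ x * (h x * |u x| ^ l)
      ≤ μ x * (gradm w μ m u x ^ l + h x * |u x| ^ l) := by
        gcongr
        · exact hμ x
        · exact le_add_of_nonneg_left (Real.rpow_nonneg (gradm_nonneg w μ m u x) l)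
    _ ≤ _ := Finset.single_le_sum
        (fun y _ => mul_nonneg (hμ y) (sobolev_integrand_nonneg w m hh u y)) (Finset.mem_univ x)

end Sobolev

/-- `max {F(x, s, t) : x ∈ V, |s| ≤ a, |t| ≤ b}` as it appears in (F3). -/
noncomputable def boxSup (F : V → ℝ → ℝ → ℝ) (a b : ℝ) : ℝ :=
  sSup {z : ℝ | ∃ x : V, ∃ s t : ℝ, |s| ≤ a ∧ |t| ≤ b ∧ z = F x s t}

lemma le_boxSup {F : V → ℝ → ℝ → ℝ} (hF : ∀ x, Continuous (fun st : ℝ × ℝ => F x st.1 st.2))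
    {a b s t : ℝ} (hs : |s| ≤ a) (ht : |t| ≤ b) (x : V) : F x s t ≤ boxSup F a b := by
  have hbdd : BddAbove {z : ℝ | ∃ x : V, ∃ s t : ℝ, |s| ≤ a ∧ |t| ≤ b ∧ z = F x s t} := by
    refine (isCompact_iUnion fun x => (isCompact_Icc.prod isCompact_Icc).image (hF x)
      (s := Set.Icc (-a) a ×ˢ Set.Icc (-b) b)).bddAbove.mono ?_
    rintro z ⟨x, s, t, hs, ht, rfl⟩
    exact Set.mem_iUnion.mpr ⟨x, (s, t), ⟨abs_le.mp hs, abs_le.mp ht⟩, rfl⟩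
  exact le_csSup hbdd ⟨x, s, t, hs, ht, rfl⟩

section Extrema

variable [Nonempty V]

lemma fmin_le (f : V → ℝ) (x : V) : fmin f ≤ f x :=
  Finset.inf'_le f (Finset.mem_univ x)

lemma fmin_pos {f : V → ℝ} (hf : ∀ x, 0 < f x) : 0 < fmin f :=
  (Finset.lt_inf'_iff _).mpr fun x _ => hf x

lemma abs_le_of_wnorm_rpow_le (w : V → V → ℝ) {μ h : V → ℝ} (m : ℕ) {l c : ℝ} (hl : 0 < l)
    (hμ : ∀ x, 0 < μ x) (hh : ∀ x, 0 < h x) {u : V → ℝ}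
    (hu : (1 / l) * wnorm w μ h m l u ^ l ≤ c) (x : V) :
    |u x| ≤ (l * c) ^ (1 / l) / ((fmin h) ^ (1 / l) * (fmin μ) ^ (1 / l)) := by
  have hhmin := fmin_pos hh
  have hμmin := fmin_pos hμ
  have hkey : fmin h * fmin μ * |u x| ^ l ≤ l * c :=
    calc fmin h * fmin μ * |u x| ^ l ≤ μ x * (h x * |u x| ^ l) := by
          rw [mul_comm (fmin h), mul_assoc]
          gcongr
          · exact (hμ x).le
          · exact fmin_le μ x
          · exact fmin_le h x
      _ ≤ wnorm w μ h m l u ^ l :=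
          mul_mul_abs_rpow_le_wnorm_rpow w m hl (fun y => (hμ y).le) (fun y => (hh y).le) u x
      _ ≤ l * c := by rwa [one_div, inv_mul_le_iff₀ hl] at hu
  have hlc : 0 ≤ l * c := (by positivity : 0 ≤ fmin h * fmin μ * |u x| ^ l).trans hkey
  rw [← Real.mul_rpow hhmin.le hμmin.le, ← Real.div_rpow hlc (by positivity), one_div,
    Real.le_rpow_inv_iff_of_pos (abs_nonneg _) (by positivity) hl, le_div_iff₀ (by positivity),
    mul_comm]
  exact hkey

end Extrema

end

section Functionals

variable {V : Type*} [Fintype V] (w : V → V → ℝ) {μ h1 h2 : V → ℝ} {m1 m2 : ℕ} {p q : ℝ}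

lemma PhiF_const (hm1 : 1 ≤ m1) (hm2 : 1 ≤ m2) (hp : 0 < p) (hq : 0 < q)
    (hμ : ∀ x, 0 ≤ μ x) (hh1 : ∀ x, 0 ≤ h1 x) (hh2 : ∀ x, 0 ≤ h2 x) (s t : ℝ) :
    PhiF w μ h1 h2 m1 m2 p q (fun _ => s) (fun _ => t) =
      (|s| ^ p / p) * intV μ h1 + (|t| ^ q / q) * intV μ h2 := by
  rw [PhiF, wnorm_const_rpow w m1 hm1 hp hμ hh1, wnorm_const_rpow w m2 hm2 hq hμ hh2]
  ring

lemma rpow_le_rpow_mul_of_mul_rpow_neg_le {γ δ B : ℝ} (hp : 0 < p) (hγ : 0 ≤ γ) (hB : 0 < B)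
    (h : γ * B ^ (-(1 / p)) ≤ δ) : γ ^ p ≤ δ ^ p * B := by
  have hpow : γ ^ p * B⁻¹ ≤ δ ^ p := by
    have := Real.rpow_le_rpow (by positivity) h hp.le
    rwa [Real.mul_rpow hγ (by positivity), ← Real.rpow_mul hB.le,
      show -(1 / p) * p = -1 by field_simp, Real.rpow_neg_one] at this
  rwa [← div_eq_mul_inv, div_le_iff₀ hB] at hpow

lemma sSup_PsiF_le [Nonempty V] {F : V → ℝ → ℝ → ℝ}
    (hF : ∀ x, Continuous (fun st : ℝ × ℝ => F x st.1 st.2))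
    (hm1 : 1 ≤ m1) (hm2 : 1 ≤ m2) (hp : 0 < p) (hq : 0 < q)
    (hμ : ∀ x, 0 < μ x) (hh1 : ∀ x, 0 < h1 x) (hh2 : ∀ x, 0 < h2 x) {c : ℝ} (hc : 0 ≤ c) :
    sSup {z : ℝ | ∃ u v : V → ℝ, PhiF w μ h1 h2 m1 m2 p q u v ≤ c ∧ z = PsiF μ F u v} ≤
      boxSup F ((p * c) ^ (1 / p) / ((fmin h1) ^ (1 / p) * (fmin μ) ^ (1 / p)))
          ((q * c) ^ (1 / q) / ((fmin h2) ^ (1 / q) * (fmin μ) ^ (1 / q))) *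
        ∑ x, μ x := by
  have hμ0 : ∀ x, 0 ≤ μ x := fun x => (hμ x).le
  have hh10 : ∀ x, 0 ≤ h1 x := fun x => (hh1 x).le
  have hh20 : ∀ x, 0 ≤ h2 x := fun x => (hh2 x).le
  have hzero : PhiF w μ h1 h2 m1 m2 p q (fun _ => 0) (fun _ => 0) ≤ c := by
    rw [PhiF_const w hm1 hm2 hp hq hμ0 hh10 hh20, abs_zero, Real.zero_rpow hp.ne',
      Real.zero_rpow hq.ne']
    simpa using hc
  refine csSup_le ⟨_, _, _, hzero, rfl⟩ ?_
  rintro _ ⟨u, v, hΦ, rfl⟩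
  have hu : 0 ≤ (1 / p) * wnorm w μ h1 m1 p u ^ p :=
    mul_nonneg (by positivity) (Real.rpow_nonneg (wnorm_nonneg w m1 hμ0 hh10 u) p)
  have hv : 0 ≤ (1 / q) * wnorm w μ h2 m2 q v ^ q :=
    mul_nonneg (by positivity) (Real.rpow_nonneg (wnorm_nonneg w m2 hμ0 hh20 v) q)
  rw [PhiF] at hΦ
  exact intV_le_mul_sum hμ0 fun x => le_boxSup hF
    (abs_le_of_wnorm_rpow_le w m1 hp hμ hh1 (by linarith) x)
    (abs_le_of_wnorm_rpow_le w m2 hq hμ hh2 (by linarith) x) x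

end Functionals

theorem stmt6_general {V : Type*} [Fintype V] [Nonempty V]
    (w : V → V → ℝ) (μ : V → ℝ)
    (hμ : ∀ x, 0 < μ x)
    (m1 m2 : ℕ) (hm1 : 1 ≤ m1) (hm2 : 1 ≤ m2)
    (p q : ℝ) (hp : 2 ≤ p) (hq : 2 ≤ q)
    (h1 h2 : V → ℝ) (hh1 : ∀ x, 0 < h1 x) (hh2 : ∀ x, 0 < h2 x)
    (F : V → ℝ → ℝ → ℝ)
    (hFcont : ∀ x, Continuous (fun st : ℝ × ℝ => F x st.1 st.2))
    -- (F3)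
    (γ1 γ2 δ1 δ2 : ℝ) (hγ1 : 0 < γ1) (hγ2 : 0 < γ2) (hδ1 : 0 < δ1) (hδ2 : 0 < δ2)
    (hδκ1 : δ1 > γ1 * ((1 / p) * intV μ h1) ^ (-(1 / p)))
    (hδκ2 : δ2 > γ2 * ((1 / q) * intV μ h2) ^ (-(1 / q)))
    (hF3 : (γ1 ^ p + γ2 ^ q)⁻¹ *
        sSup {z : ℝ | ∃ x : V, ∃ s t : ℝ,
          |s| ≤ (p * (γ1 ^ p + γ2 ^ q)) ^ (1 / p) /
                  ((fmin h1) ^ (1 / p) * (fmin μ) ^ (1 / p)) ∧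
          |t| ≤ (q * (γ1 ^ p + γ2 ^ q)) ^ (1 / q) /
                  ((fmin h2) ^ (1 / q) * (fmin μ) ^ (1 / q)) ∧
          z = F x s t} * (∑ x, μ x) <
      fmin (fun x => F x δ1 δ2) * (∑ x, μ x) /
        ((δ1 ^ p / p) * intV μ h1 + (δ2 ^ q / q) * intV μ h2)) :
    PhiF w μ h1 h2 m1 m2 p q (fun _ => δ1) (fun _ => δ2) =
        (δ1 ^ p / p) * intV μ h1 + (δ2 ^ q / q) * intV μ h2 ∧
    γ1 ^ p + γ2 ^ q ≤ PhiF w μ h1 h2 m1 m2 p q (fun _ => δ1) (fun _ => δ2) ∧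
    sSup {z : ℝ | ∃ u v : V → ℝ, PhiF w μ h1 h2 m1 m2 p q u v ≤ γ1 ^ p + γ2 ^ q ∧
          z = PsiF μ F u v} / (γ1 ^ p + γ2 ^ q) <
      PsiF μ F (fun _ => δ1) (fun _ => δ2) /
        PhiF w μ h1 h2 m1 m2 p q (fun _ => δ1) (fun _ => δ2) := by
  have hp0 : 0 < p := by linarith
  have hq0 : 0 < q := by linarith
  have hμ0 : ∀ x, 0 ≤ μ x := fun x => (hμ x).le
  have hPhi : PhiF w μ h1 h2 m1 m2 p q (fun _ => δ1) (fun _ => δ2) =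
      (δ1 ^ p / p) * intV μ h1 + (δ2 ^ q / q) * intV μ h2 := by
    rw [PhiF_const w hm1 hm2 hp0 hq0 hμ0 (fun x => (hh1 x).le) (fun x => (hh2 x).le),
      abs_of_pos hδ1, abs_of_pos hδ2]
  have hI1 : 0 < intV μ h1 :=
    Finset.sum_pos (fun x _ => mul_pos (hμ x) (hh1 x)) Finset.univ_nonempty
  have hI2 : 0 < intV μ h2 :=
    Finset.sum_pos (fun x _ => mul_pos (hμ x) (hh2 x)) Finset.univ_nonempty
  have hγδ1 := rpow_le_rpow_mul_of_mul_rpow_neg_le hp0 hγ1.le (by positivity) hδκ1.le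
  have hγδ2 := rpow_le_rpow_mul_of_mul_rpow_neg_le hq0 hγ2.le (by positivity) hδκ2.le
  have hΦ : γ1 ^ p + γ2 ^ q ≤ PhiF w μ h1 h2 m1 m2 p q (fun _ => δ1) (fun _ => δ2) := by
    rw [hPhi]
    linarith [hγδ1.trans_eq (by ring : _ = δ1 ^ p / p * intV μ h1),
      hγδ2.trans_eq (by ring : _ = δ2 ^ q / q * intV μ h2)]
  have hc : 0 < γ1 ^ p + γ2 ^ q := by positivity
  refine ⟨hPhi, hΦ, ?_⟩
  calc _ ≤ (γ1 ^ p + γ2 ^ q)⁻¹ * boxSup F _ _ * ∑ x, μ x := by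
        rw [div_eq_inv_mul, mul_assoc]
        gcongr
        exact sSup_PsiF_le w hFcont hm1 hm2 hp0 hq0 hμ hh1 hh2 hc.le
    _ < _ := hPhi ▸ hF3
    _ ≤ _ := by
        gcongr
        · exact hc.le.trans hΦ
        · exact mul_sum_le_intV hμ0 fun x => fmin_le (fun y => F y δ1 δ2) x

/-- Lemma 3.2. -/
theorem stmt6 {V : Type*} [Fintype V] [Nonempty V]
    (w : V → V → ℝ) (μ : V → ℝ)
    (hw_symm : ∀ x y, w x y = w y x) (hw_nonneg : ∀ x y, 0 ≤ w x y)
    (hw_diag : ∀ x, w x x = 0) (hμ : ∀ x, 0 < μ x)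
    (m1 m2 : ℕ) (hm1 : 1 ≤ m1) (hm2 : 1 ≤ m2)
    (p q : ℝ) (hp : 2 ≤ p) (hq : 2 ≤ q)
    (h1 h2 : V → ℝ) (hh1 : ∀ x, 0 < h1 x) (hh2 : ∀ x, 0 < h2 x)
    (F : V → ℝ → ℝ → ℝ)
    (hFcont : ∀ x, Continuous (fun st : ℝ × ℝ => F x st.1 st.2))
    -- (F3)
    (γ1 γ2 δ1 δ2 : ℝ) (hγ1 : 0 < γ1) (hγ2 : 0 < γ2) (hδ1 : 0 < δ1) (hδ2 : 0 < δ2)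
    (hδκ1 : δ1 > γ1 * ((1 / p) * intV μ h1) ^ (-(1 / p)))
    (hδκ2 : δ2 > γ2 * ((1 / q) * intV μ h2) ^ (-(1 / q)))
    (hF3 : (γ1 ^ p + γ2 ^ q)⁻¹ *
        sSup {z : ℝ | ∃ x : V, ∃ s t : ℝ,
          |s| ≤ (p * (γ1 ^ p + γ2 ^ q)) ^ (1 / p) /
                  ((fmin h1) ^ (1 / p) * (fmin μ) ^ (1 / p)) ∧
          |t| ≤ (q * (γ1 ^ p + γ2 ^ q)) ^ (1 / q) /
                  ((fmin h2) ^ (1 / q) * (fmin μ) ^ (1 / q)) ∧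
          z = F x s t} * (∑ x, μ x) <
      fmin (fun x => F x δ1 δ2) * (∑ x, μ x) /
        ((δ1 ^ p / p) * intV μ h1 + (δ2 ^ q / q) * intV μ h2)) :
    PhiF w μ h1 h2 m1 m2 p q (fun _ => δ1) (fun _ => δ2) =
        (δ1 ^ p / p) * intV μ h1 + (δ2 ^ q / q) * intV μ h2 ∧
    γ1 ^ p + γ2 ^ q ≤ PhiF w μ h1 h2 m1 m2 p q (fun _ => δ1) (fun _ => δ2) ∧
    sSup {z : ℝ | ∃ u v : V → ℝ, PhiF w μ h1 h2 m1 m2 p q u v ≤ γ1 ^ p + γ2 ^ q ∧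
          z = PsiF μ F u v} / (γ1 ^ p + γ2 ^ q) <
      PsiF μ F (fun _ => δ1) (fun _ => δ2) /
        PhiF w μ h1 h2 m1 m2 p q (fun _ => δ1) (fun _ => δ2) :=
  stmt6_general w μ hμ m1 m2 hm1 hm2 p q hp hq h1 h2 hh1 hh2 F hFcont γ1 γ2 δ1 δ2 hγ1 hγ2 hδ1 hδ2
    hδκ1 hδκ2 hF3
end

section
/- (Lemma 3.4) Let G=(V,E) be a finite graph, m1,m2≥1 integers, p,q≥2, h1,h2:V→(0,∞). Let W be the (finite-dimensional) real normed vector space of pairs (u,v) of functions V→ℝ with norm ‖(u,v)‖ = ‖u‖_{W^{m1,p}} + ‖v‖_{W^{m2,q}} (Sobolev norms with weights h1,h2), and let W* be its continuous dual. Define T:W→W* by ⟨T(u,v),(φ1,φ2)⟩ = B_{m1,p}(u,φ1) + ∫_V h1|u|^{p−2}u·φ1 dμ + B_{m2,q}(v,φ2) + ∫_V h2|v|^{q−2}v·φ2 dμ. Then T is a bijection from W onto W* whose inverse T^{−1}:W*→W is continuous. -/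
open Real

/-!
`T` is the Gâteaux derivative of the energy
`Φ(u, v) = (1/p) ∫ (|∇^{m1} u|^p + h1 |u|^p) + (1/q) ∫ (|∇^{m2} v|^q + h2 |v|^q)`.
Each summand of `Φ` is `c · β(u, u)^{p/2}` for a positive semidefinite symmetric bilinear form `β`
(`Γ(Δ^k u, Δ^k u)(x)`, `(Δ^k u)(x)^2` or `u(x)^2`), and by Cauchy–Schwarz the derivative of such a
term is monotone. The terms `h |u|^p` make `T` strictly monotone, hence injective, and give `Φ`
quadratic growth, so `Φ - f` attains its minimum, where `T = f`: `T` is onto. Convexity gives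
`⟪T z, z⟫ ≥ Φ z - Φ 0`, so `‖T z‖ → ∞`; thus `T` is a proper continuous bijection between
finite-dimensional spaces, hence a homeomorphism.
-/

open Filter Function

section RealInequalities

variable {p : ℝ}

lemma sq_sub_one_le_rpow {s : ℝ} (hs : 0 ≤ s) (hp : 2 ≤ p) : s ^ 2 - 1 ≤ s ^ p := by
  rcases le_total s 1 with h1 | h1
  · nlinarith [Real.rpow_nonneg hs p]
  · have := Real.rpow_le_rpow_of_exponent_le h1 hp
    rw [Real.rpow_two] at this
    linarith

lemma rpow_sub_two_mul_self {A : ℝ} (hA : 0 ≤ A) (hp : 2 ≤ p) : A ^ (p - 2) * A = A ^ (p - 1) := by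
  rw [← Real.rpow_add_one' hA (by linarith)]
  ring_nf

/-- With `A = √(β u u)`, `B = √(β v v)` and `g = β u v`, this splits the monotonicity defect into
a term that is nonnegative because `t ↦ t ^ (p - 1)` is monotone and one that is nonnegative by
Cauchy–Schwarz. -/
lemma rpow_monotonicity_identity {A B g : ℝ} (hA : 0 ≤ A) (hB : 0 ≤ B) (hp : 2 ≤ p) :
    A ^ (p - 2) * (A ^ 2 - g) - B ^ (p - 2) * (g - B ^ 2)
      = (A ^ (p - 1) - B ^ (p - 1)) * (A - B) + (A ^ (p - 2) + B ^ (p - 2)) * (A * B - g) := by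
  rw [← rpow_sub_two_mul_self hA hp, ← rpow_sub_two_mul_self hB hp]
  ring

lemma rpow_monotonicity_nonneg {A B g : ℝ} (hA : 0 ≤ A) (hB : 0 ≤ B) (hg : g ≤ A * B)
    (hp : 2 ≤ p) : 0 ≤ A ^ (p - 2) * (A ^ 2 - g) - B ^ (p - 2) * (g - B ^ 2) := by
  rw [rpow_monotonicity_identity hA hB hp]
  have hmono : 0 ≤ (A ^ (p - 1) - B ^ (p - 1)) * (A - B) := by
    rcases le_total A B with h | h
    · exact mul_nonneg_of_nonpos_of_nonpos
        (sub_nonpos.2 (Real.rpow_le_rpow hA h (by linarith))) (sub_nonpos.2 h)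
    · exact mul_nonneg (sub_nonneg.2 (Real.rpow_le_rpow hB h (by linarith))) (sub_nonneg.2 h)
  have := Real.rpow_nonneg hA (p - 2)
  have := Real.rpow_nonneg hB (p - 2)
  nlinarith

lemma rpow_monotonicity_pos {A B g : ℝ} (hA : 0 ≤ A) (hB : 0 ≤ B) (hg : |g| ≤ A * B)
    (hp : 2 ≤ p) (hd : 0 < A ^ 2 - 2 * g + B ^ 2) :
    0 < A ^ (p - 2) * (A ^ 2 - g) - B ^ (p - 2) * (g - B ^ 2) := by
  rcases eq_or_ne A B with rfl | hAB
  · have hA0 : 0 < A := by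
      refine hA.lt_of_ne fun h => ?_
      subst h
      have : g = 0 := by simpa using hg
      subst this
      simp at hd
    have := Real.rpow_pos_of_pos hA0 (p - 2)
    nlinarith
  · rw [rpow_monotonicity_identity hA hB hp]
    have hstrict : 0 < (A ^ (p - 1) - B ^ (p - 1)) * (A - B) := by
      rcases hAB.lt_or_gt with h | h
      · exact mul_pos_of_neg_of_neg
          (sub_neg.2 (Real.rpow_lt_rpow hA h (by linarith))) (sub_neg.2 h)
      · exact mul_pos (sub_pos.2 (Real.rpow_lt_rpow hB h (by linarith))) (sub_pos.2 h)
    have := Real.rpow_nonneg hA (p - 2)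
    have := Real.rpow_nonneg hB (p - 2)
    nlinarith [le_abs_self g]

end RealInequalities

namespace LinearMap.BilinForm

variable {E : Type*} [AddCommGroup E] [Module ℝ E] {β : LinearMap.BilinForm ℝ E}

lemma apply_add_smul_self (hβ : β.IsSymm) (u φ : E) (t : ℝ) :
    β (u + t • φ) (u + t • φ) = β u u + t * (2 * β u φ) + t ^ 2 * β φ φ := by
  simp only [map_add, map_smul, LinearMap.add_apply, LinearMap.smul_apply, smul_eq_mul,
    hβ.eq φ u]
  ring

lemma apply_sub_sub_self (hβ : β.IsSymm) (u v : E) :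
    β (u - v) (u - v) = β u u - 2 * β u v + β v v := by
  simp only [map_sub, LinearMap.sub_apply, hβ.eq v u]
  ring

lemma sq_apply_le (hβ : β.IsSymm) (hpos : ∀ u, 0 ≤ β u u) (u v : E) :
    β u v ^ 2 ≤ β u u * β v v := by
  have := discrim_le_zero (a := β v v) (b := 2 * β u v) (c := β u u) fun t => by
    have := hpos (u + t • v)
    rw [apply_add_smul_self hβ] at this
    linear_combination this
  rw [discrim] at this
  linarith

lemma abs_apply_le_sqrt_mul_sqrt (hβ : β.IsSymm) (hpos : ∀ u, 0 ≤ β u u) (u v : E) :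
    |β u v| ≤ √(β u u) * √(β v v) := by
  rw [← Real.sqrt_mul (hpos u), ← Real.sqrt_sq_eq_abs]
  exact Real.sqrt_le_sqrt (sq_apply_le hβ hpos u v)

variable {p : ℝ}

lemma hasDerivAt_sqrt_apply_rpow (hβ : β.IsSymm) (hpos : ∀ u, 0 ≤ β u u) (hp : 2 ≤ p)
    (u φ : E) :
    HasDerivAt (fun t : ℝ => √(β (u + t • φ) (u + t • φ)) ^ p)
      (p * √(β u u) ^ (p - 2) * β u φ) 0 := by
  have hsqrt : ∀ s : ℝ, 0 ≤ s → ∀ r : ℝ, √s ^ r = s ^ (r / 2) := fun s hs r => by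
    rw [Real.sqrt_eq_rpow, ← Real.rpow_mul hs]; ring_nf
  have hquad : HasDerivAt (fun t : ℝ => β (u + t • φ) (u + t • φ)) (2 * β u φ) 0 := by
    simp only [apply_add_smul_self hβ]
    simpa using (((hasDerivAt_id (0 : ℝ)).mul_const (2 * β u φ)).const_add (β u u)).fun_add
      ((hasDerivAt_pow 2 (0 : ℝ)).mul_const (β φ φ))
  convert hquad.rpow_const (p := p / 2) (Or.inr (by linarith)) using 1
  · ext t; exact hsqrt _ (hpos _) p
  · simp only [zero_smul, add_zero]
    rw [hsqrt _ (hpos u), show (p - 2) / 2 = p / 2 - 1 by ring]; ring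

lemma sqrt_rpow_monotonicity_nonneg (hβ : β.IsSymm) (hpos : ∀ u, 0 ≤ β u u) (hp : 2 ≤ p)
    (u v : E) :
    0 ≤ √(β u u) ^ (p - 2) * (√(β u u) ^ 2 - β u v)
      - √(β v v) ^ (p - 2) * (β u v - √(β v v) ^ 2) :=
  rpow_monotonicity_nonneg (Real.sqrt_nonneg _) (Real.sqrt_nonneg _)
    ((le_abs_self _).trans (abs_apply_le_sqrt_mul_sqrt hβ hpos u v)) hp

lemma sqrt_rpow_monotonicity_pos (hβ : β.IsSymm) (hpos : ∀ u, 0 ≤ β u u) (hp : 2 ≤ p)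
    {u v : E} (huv : 0 < β (u - v) (u - v)) :
    0 < √(β u u) ^ (p - 2) * (√(β u u) ^ 2 - β u v)
      - √(β v v) ^ (p - 2) * (β u v - √(β v v) ^ 2) := by
  refine rpow_monotonicity_pos (Real.sqrt_nonneg _) (Real.sqrt_nonneg _)
    (abs_apply_le_sqrt_mul_sqrt hβ hpos u v) hp ?_
  rwa [Real.sq_sqrt (hpos _), Real.sq_sqrt (hpos _), ← apply_sub_sub_self hβ]

end LinearMap.BilinForm

section PowerPairing

variable {ι E : Type*} [Fintype ι] [AddCommGroup E] [Module ℝ E]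
  (β : ι → LinearMap.BilinForm ℝ E) (c : ι → ℝ) (p : ℝ)

noncomputable def powerPairing (u : E) : E →ₗ[ℝ] ℝ := ∑ i, (c i * √(β i u u) ^ (p - 2)) • β i u

noncomputable def powerEnergy (u : E) : ℝ := ∑ i, c i / p * √(β i u u) ^ p

lemma powerPairing_apply (u φ : E) :
    powerPairing β c p u φ = ∑ i, c i * √(β i u u) ^ (p - 2) * β i u φ := by
  simp [powerPairing, mul_assoc]

variable {β c p}

lemma powerEnergy_ge (hpos : ∀ i u, 0 ≤ β i u u) (hc : ∀ i, 0 ≤ c i) (hp : 2 ≤ p) (u : E) :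
    (∑ i, c i * β i u u - ∑ i, c i) / p ≤ powerEnergy β c p u := by
  rw [← Finset.sum_sub_distrib, Finset.sum_div]
  refine Finset.sum_le_sum fun i _ => ?_
  have := sq_sub_one_le_rpow (Real.sqrt_nonneg (β i u u)) hp
  rw [Real.sq_sqrt (hpos i u)] at this
  have hp0 : 0 < p := by linarith
  rw [div_mul_eq_mul_div, div_le_div_iff_of_pos_right hp0]
  nlinarith [mul_le_mul_of_nonneg_left this (hc i)]

variable (hβ : ∀ i, (β i).IsSymm) (hpos : ∀ i u, 0 ≤ β i u u)
include hβ hpos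

lemma hasDerivAt_powerEnergy (hp : 2 ≤ p) (u φ : E) :
    HasDerivAt (fun t : ℝ => powerEnergy β c p (u + t • φ)) (powerPairing β c p u φ) 0 := by
  have := HasDerivAt.fun_sum (u := Finset.univ) fun i _ =>
    (LinearMap.BilinForm.hasDerivAt_sqrt_apply_rpow (hβ i) (hpos i) hp u φ).const_mul (c i / p)
  refine this.congr_deriv ?_
  rw [powerPairing_apply]
  refine Finset.sum_congr rfl fun i _ => ?_
  field_simp

lemma powerPairing_sub_sub_eq (u v : E) :
    powerPairing β c p u (u - v) - powerPairing β c p v (u - v)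
      = ∑ i, c i * (√(β i u u) ^ (p - 2) * (√(β i u u) ^ 2 - β i u v)
          - √(β i v v) ^ (p - 2) * (β i u v - √(β i v v) ^ 2)) := by
  simp only [powerPairing_apply, ← Finset.sum_sub_distrib, map_sub,
    Real.sq_sqrt (hpos _ _), (hβ _).eq v u]
  refine Finset.sum_congr rfl fun i _ => by ring

lemma powerPairing_sub_sub_pos (hc : ∀ i, 0 ≤ c i) (hp : 2 ≤ p) {u v : E}
    (huv : ∃ i, 0 < c i ∧ 0 < β i (u - v) (u - v)) :
    0 < powerPairing β c p u (u - v) - powerPairing β c p v (u - v) := by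
  obtain ⟨j, hcj, hj⟩ := huv
  rw [powerPairing_sub_sub_eq hβ hpos]
  exact Finset.sum_pos' (fun i _ => mul_nonneg (hc i)
      (LinearMap.BilinForm.sqrt_rpow_monotonicity_nonneg (hβ i) (hpos i) hp u v))
    ⟨j, Finset.mem_univ j,
      mul_pos hcj (LinearMap.BilinForm.sqrt_rpow_monotonicity_pos (hβ j) (hpos j) hp hj)⟩

end PowerPairing

section Continuity

variable {ι E : Type*} [Fintype ι] [NormedAddCommGroup E] [NormedSpace ℝ E]
  [FiniteDimensional ℝ E] {β : ι → LinearMap.BilinForm ℝ E} {c : ι → ℝ} {p : ℝ}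

lemma LinearMap.BilinForm.continuous_apply_self (β : LinearMap.BilinForm ℝ E) :
    Continuous fun u => β u u :=
  β.toContinuousBilinearMap.continuous₂.comp (continuous_id.prodMk continuous_id)

lemma continuous_powerEnergy (hp : 0 ≤ p) : Continuous (powerEnergy β c p) :=
  continuous_finsetSum _ fun i _ => continuous_const.mul ((Real.continuous_rpow_const hp).comp
    (Real.continuous_sqrt.comp (β i).continuous_apply_self))

lemma continuous_powerPairing_apply (hp : 2 ≤ p) (φ : E) :
    Continuous fun u => powerPairing β c p u φ := by
  simp only [powerPairing_apply]
  exact continuous_finsetSum _ fun i _ => (continuous_const.mul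
    ((Real.continuous_rpow_const (by linarith)).comp
      (Real.continuous_sqrt.comp (β i).continuous_apply_self))).mul
    (LinearMap.continuous_of_finiteDimensional ((β i).flip φ))

end Continuity

structure IsCoerciveGradient {E : Type*} [NormedAddCommGroup E] [NormedSpace ℝ E]
    (Φ : E → ℝ) (T : E → E →L[ℝ] ℝ) : Prop where
  continuous : Continuous Φ
  hasDerivAt : ∀ u φ, HasDerivAt (fun t : ℝ => Φ (u + t • φ)) (T u φ) 0
  sub_sub_pos : ∀ u v, u ≠ v → 0 < T u (u - v) - T v (u - v)
  continuous_apply : ∀ φ, Continuous fun u => T u φ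
  quadratic_growth : ∃ a > 0, ∃ b, ∀ u, a * ‖u‖ ^ 2 - b ≤ Φ u

namespace IsCoerciveGradient

variable {E F : Type*} [NormedAddCommGroup E] [NormedSpace ℝ E] [NormedAddCommGroup F]
  [NormedSpace ℝ F] {Φ : E → ℝ} {T : E → E →L[ℝ] ℝ} {Ψ : F → ℝ} {S : F → F →L[ℝ] ℝ}

section

variable (hΦ : IsCoerciveGradient Φ T)
include hΦ

lemma sub_sub_nonneg (u v : E) : 0 ≤ T u (u - v) - T v (u - v) := by
  rcases eq_or_ne u v with rfl | huv
  · simp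
  · exact (hΦ.sub_sub_pos u v huv).le

lemma hasDerivAt_line (v d : E) (s : ℝ) :
    HasDerivAt (fun r : ℝ => Φ (v + r • d)) (T (v + s • d) d) s := by
  have := HasDerivAt.comp_sub_const s s (by rw [sub_self]; exact hΦ.hasDerivAt (v + s • d) d)
  simpa only [add_assoc, ← add_smul, add_sub_cancel] using this

/-- Convexity of `Φ`, in tangent form: by the mean value theorem, `Φ u - Φ v` is a slope of `Φ`
at a point of the segment `[v, u]`, and monotonicity of `T` bounds it by the slope at `u`. -/
lemma sub_le_apply_sub (u v : E) : Φ u - Φ v ≤ T u (u - v) := by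
  obtain ⟨ξ, hξ, hslope⟩ := exists_hasDerivAt_eq_slope (fun r : ℝ => Φ (v + r • (u - v)))
    (fun r => T (v + r • (u - v)) (u - v)) zero_lt_one
    (fun r _ => (hΦ.hasDerivAt_line v (u - v) r).continuousAt.continuousWithinAt)
    (fun r _ => hΦ.hasDerivAt_line v (u - v) r)
  simp only [one_smul, zero_smul, add_zero, add_sub_cancel, sub_zero, div_one] at hslope
  have hmono := hΦ.sub_sub_nonneg u (v + ξ • (u - v))
  have hsub : u - (v + ξ • (u - v)) = (1 - ξ) • (u - v) := by
    rw [sub_smul, one_smul]; abel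
  rw [hsub, map_smul, map_smul, smul_eq_mul, smul_eq_mul, ← mul_sub] at hmono
  linarith [nonneg_of_mul_nonneg_right hmono (sub_pos.2 hξ.2)]

lemma eq_of_forall_sub_le {f : E →L[ℝ] ℝ} {u₀ : E} (hmin : ∀ u, Φ u₀ - f u₀ ≤ Φ u - f u) :
    T u₀ = f := by
  ext φ
  have hline : HasDerivAt (fun t : ℝ => u₀ + t • φ) φ 0 := by
    simpa using ((hasDerivAt_id (0 : ℝ)).smul_const φ).const_add u₀
  have hderiv := (hΦ.hasDerivAt u₀ φ).sub (f.hasFDerivAt.comp_hasDerivAt (0 : ℝ) hline)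
  have hloc : IsLocalMin (fun t : ℝ => Φ (u₀ + t • φ) - f (u₀ + t • φ)) 0 :=
    Filter.Eventually.of_forall fun t => by simpa using hmin (u₀ + t • φ)
  exact sub_eq_zero.1 (hloc.hasDerivAt_eq_zero hderiv)

lemma injective : Injective T := fun u v h => by
  by_contra huv
  simpa [h] using hΦ.sub_sub_pos u v huv

variable [FiniteDimensional ℝ E]

lemma tendsto_sub_mul_norm (C : ℝ) :
    Tendsto (fun u => Φ u - C * ‖u‖) (cocompact E) atTop := by
  obtain ⟨a, ha, b, hab⟩ := hΦ.quadratic_growth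
  have hquad : Tendsto (fun r : ℝ => r * (a * r - C) - b) atTop atTop :=
    tendsto_atTop_add_const_right _ (-b) (tendsto_id.atTop_mul_atTop₀
      (tendsto_atTop_add_const_right _ (-C) (tendsto_id.const_mul_atTop ha)))
  refine tendsto_atTop_mono (fun u => ?_) (hquad.comp tendsto_norm_cocompact_atTop)
  have := hab u
  simp only [comp_apply]
  nlinarith

lemma surjective : Surjective T := fun f => by
  have hf : ∀ u, f u ≤ ‖f‖ * ‖u‖ := fun u => (le_abs_self _).trans (f.le_opNorm u)
  have hgrowth : Tendsto (fun u => Φ u - f u) (cocompact E) atTop :=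
    tendsto_atTop_mono (fun u => by linarith [hf u]) (hΦ.tendsto_sub_mul_norm ‖f‖)
  obtain ⟨u₀, hu₀⟩ := (hΦ.continuous.sub f.continuous).exists_forall_le hgrowth
  exact ⟨u₀, hΦ.eq_of_forall_sub_le hu₀⟩

lemma tendsto_norm_apply : Tendsto (fun u => ‖T u‖) (cocompact E) atTop := by
  refine tendsto_atTop.2 fun M => ?_
  filter_upwards [(hΦ.tendsto_sub_mul_norm M).eventually_ge_atTop (Φ 0),
    tendsto_norm_cocompact_atTop.eventually_gt_atTop 0] with u hu hpos
  have h := (hΦ.sub_le_apply_sub u 0).trans ((le_abs_self _).trans ((T u).le_opNorm _))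
  rw [sub_zero] at h
  nlinarith

theorem isHomeomorph : IsHomeomorph T := by
  have hcont : Continuous T := continuous_clm_apply.2 hΦ.continuous_apply
  refine isHomeomorph_iff_continuous_isClosedMap_bijective.2
    ⟨hcont, ?_, hΦ.injective, hΦ.surjective⟩
  refine (isProperMap_iff_tendsto_cocompact.2 ⟨hcont, ?_⟩).isClosedMap
  rw [← Metric.cobounded_eq_cocompact (α := E →L[ℝ] ℝ), ← tendsto_norm_atTop_iff_cobounded]
  exact hΦ.tendsto_norm_apply

end

lemma prod (hΦ : IsCoerciveGradient Φ T) (hΨ : IsCoerciveGradient Ψ S) :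
    IsCoerciveGradient (fun z : E × F => Φ z.1 + Ψ z.2) fun z => (T z.1).coprod (S z.2) where
  continuous := (hΦ.continuous.comp continuous_fst).add (hΨ.continuous.comp continuous_snd)
  hasDerivAt z ζ := (hΦ.hasDerivAt z.1 ζ.1).add (hΨ.hasDerivAt z.2 ζ.2)
  sub_sub_pos z z' hzz' := by
    simp only [ContinuousLinearMap.coprod_apply, Prod.fst_sub, Prod.snd_sub]
    have h₁ := hΦ.sub_sub_nonneg z.1 z'.1
    have h₂ := hΨ.sub_sub_nonneg z.2 z'.2
    obtain h | h : z.1 ≠ z'.1 ∨ z.2 ≠ z'.2 := by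
      contrapose! hzz'
      exact Prod.ext hzz'.1 hzz'.2
    · linarith [hΦ.sub_sub_pos _ _ h]
    · linarith [hΨ.sub_sub_pos _ _ h]
  continuous_apply ζ :=
    ((hΦ.continuous_apply ζ.1).comp continuous_fst).add
      ((hΨ.continuous_apply ζ.2).comp continuous_snd)
  quadratic_growth := by
    obtain ⟨a, ha, b, hab⟩ := hΦ.quadratic_growth
    obtain ⟨a', ha', b', hab'⟩ := hΨ.quadratic_growth
    refine ⟨min a a', lt_min ha ha', b + b', fun z => ?_⟩
    have hnorm : ‖z‖ ^ 2 ≤ ‖z.1‖ ^ 2 + ‖z.2‖ ^ 2 := by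
      rcases max_choice ‖z.1‖ ‖z.2‖ with h | h <;> rw [Prod.norm_def, h] <;>
        nlinarith [sq_nonneg ‖z.1‖, sq_nonneg ‖z.2‖]
    nlinarith [hab z.1, hab' z.2, min_le_left a a', min_le_right a a', sq_nonneg ‖z.1‖,
      sq_nonneg ‖z.2‖, (lt_min ha ha').le]

end IsCoerciveGradient

theorem isCoerciveGradient_powerEnergy {ι E : Type*} [Fintype ι] [NormedAddCommGroup E]
    [NormedSpace ℝ E] [FiniteDimensional ℝ E] {β : ι → LinearMap.BilinForm ℝ E} {c : ι → ℝ}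
    {p : ℝ} (hβ : ∀ i, (β i).IsSymm) (hpos : ∀ i u, 0 ≤ β i u u) (hc : ∀ i, 0 ≤ c i)
    (hp : 2 ≤ p) {κ : ℝ} (hκ : 0 < κ) (hdef : ∀ u, κ * ‖u‖ ^ 2 ≤ ∑ i, c i * β i u u) :
    IsCoerciveGradient (powerEnergy β c p)
      fun u => (powerPairing β c p u).toContinuousLinearMap where
  continuous := continuous_powerEnergy (by linarith)
  hasDerivAt := hasDerivAt_powerEnergy hβ hpos hp
  sub_sub_pos u v huv := by
    refine powerPairing_sub_sub_pos hβ hpos hc hp ?_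
    have hsum : ∑ _i : ι, (0 : ℝ) < ∑ i, c i * β i (u - v) (u - v) := by
      rw [Finset.sum_const_zero]
      exact (mul_pos hκ (pow_pos (norm_pos_iff.2 (sub_ne_zero.2 huv)) 2)).trans_le (hdef _)
    obtain ⟨i, -, hi⟩ := Finset.exists_lt_of_sum_lt hsum
    exact ⟨i, (pos_of_mul_pos_left hi (hpos i _)), pos_of_mul_pos_right hi (hc i)⟩
  continuous_apply := continuous_powerPairing_apply hp
  quadratic_growth := by
    refine ⟨κ / p, by positivity, (∑ i, c i) / p, fun u => ?_⟩
    refine le_trans ?_ (powerEnergy_ge hpos hc hp u)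
    rw [div_mul_eq_mul_div, ← sub_div]
    exact div_le_div_of_nonneg_right (by linarith [hdef u]) (by linarith)

lemma exists_pos_mul_norm_sq_le_sum {V : Type*} [Fintype V] {d : V → ℝ} (hd : ∀ x, 0 < d x) :
    ∃ κ > 0, ∀ u : V → ℝ, κ * ‖u‖ ^ 2 ≤ ∑ x, d x * u x ^ 2 := by
  obtain ⟨κ, hκ, hκd⟩ : ∃ κ > 0, ∀ x, κ ≤ d x := by
    rcases isEmpty_or_nonempty V with hV | hV
    · exact ⟨1, one_pos, isEmptyElim⟩
    · obtain ⟨x₀, hx₀⟩ := Finite.exists_min d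
      exact ⟨d x₀, hd x₀, hx₀⟩
  refine ⟨κ, hκ, fun u => ?_⟩
  have hnorm : ‖u‖ ^ 2 ≤ ∑ x, u x ^ 2 := by
    refine (Real.le_sqrt (norm_nonneg u) (Finset.sum_nonneg fun x _ => sq_nonneg _)).1
      ((pi_norm_le_iff_of_nonneg (Real.sqrt_nonneg _)).2 fun x => Real.abs_le_sqrt ?_)
    exact Finset.single_le_sum (fun y _ => sq_nonneg (u y)) (Finset.mem_univ x)
  calc κ * ‖u‖ ^ 2 ≤ ∑ x, κ * u x ^ 2 := by
        rw [← Finset.mul_sum]; exact mul_le_mul_of_nonneg_left hnorm hκ.le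
    _ ≤ ∑ x, d x * u x ^ 2 :=
        Finset.sum_le_sum fun x _ => mul_le_mul_of_nonneg_right (hκd x) (sq_nonneg _)

noncomputable def evalForm {V : Type*} (x : V) : LinearMap.BilinForm ℝ (V → ℝ) :=
  (LinearMap.mul ℝ ℝ).compl₁₂ (LinearMap.proj x) (LinearMap.proj x)

@[simp]
lemma evalForm_apply {V : Type*} (x : V) (u v : V → ℝ) : evalForm x u v = u x * v x := rfl

section Graph

variable {V : Type*} [Fintype V] (w : V → V → ℝ) (μ : V → ℝ)

noncomputable def laplacian : Module.End ℝ (V → ℝ) where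
  toFun := glap w μ
  map_add' u v := by
    ext x
    simp only [glap, Pi.add_apply, ← mul_add, ← Finset.sum_add_distrib]
    congr 1
    exact Finset.sum_congr rfl fun y _ => by ring
  map_smul' a u := by
    ext x
    simp only [glap, Pi.smul_apply, smul_eq_mul, RingHom.id_apply, Finset.mul_sum]
    exact Finset.sum_congr rfl fun y _ => by ring

lemma laplacian_pow_apply (k : ℕ) (u : V → ℝ) : (laplacian w μ ^ k) u = (glap w μ)^[k] u :=
  Module.End.pow_apply _ k u

noncomputable def carreDuChamp (x : V) : LinearMap.BilinForm ℝ (V → ℝ) :=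
  LinearMap.mk₂ ℝ (fun u v => ggam w μ u v x)
    (fun u u' v => by
      simp only [ggam, Pi.add_apply, ← mul_add, ← Finset.sum_add_distrib]
      congr 1
      exact Finset.sum_congr rfl fun y _ => by ring)
    (fun a u v => by
      simp only [ggam, Pi.smul_apply, smul_eq_mul, Finset.mul_sum]
      exact Finset.sum_congr rfl fun y _ => by ring)
    (fun u v v' => by
      simp only [ggam, Pi.add_apply, ← mul_add, ← Finset.sum_add_distrib]
      congr 1
      exact Finset.sum_congr rfl fun y _ => by ring)
    (fun a u v => by
      simp only [ggam, Pi.smul_apply, smul_eq_mul, Finset.mul_sum]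
      exact Finset.sum_congr rfl fun y _ => by ring)

/-- The form whose diagonal is `|∇^m u|(x) ^ 2`. -/
noncomputable def gradForm (m : ℕ) (x : V) : LinearMap.BilinForm ℝ (V → ℝ) :=
  if m % 2 = 1 then
    (carreDuChamp w μ x).compl₁₂ (laplacian w μ ^ ((m - 1) / 2)) (laplacian w μ ^ ((m - 1) / 2))
  else (evalForm x).compl₁₂ (laplacian w μ ^ (m / 2)) (laplacian w μ ^ (m / 2))

lemma gradForm_apply (m : ℕ) (x : V) (u v : V → ℝ) :
    gradForm w μ m x u v = if m % 2 = 1 then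
      ggam w μ ((glap w μ)^[(m - 1) / 2] u) ((glap w μ)^[(m - 1) / 2] v) x
    else (glap w μ)^[m / 2] u x * (glap w μ)^[m / 2] v x := by
  unfold gradForm
  split_ifs <;> simp [carreDuChamp, evalForm, laplacian_pow_apply]

lemma gradm_eq_sqrt_gradForm (m : ℕ) (u : V → ℝ) (x : V) :
    gradm w μ m u x = √(gradForm w μ m x u u) := by
  rw [gradm, gradForm_apply]
  split_ifs
  · rfl
  · exact (Real.sqrt_mul_self_eq_abs _).symm

lemma Bmp_eq_sum (m : ℕ) (p : ℝ) (u φ : V → ℝ) :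
    Bmp w μ m p u φ = ∑ x, μ x * (√(gradForm w μ m x u u) ^ (p - 2) * gradForm w μ m x u φ) := by
  simp only [Bmp, intV, gradm_eq_sqrt_gradForm, gradForm_apply]
  split_ifs
  · rfl
  · exact Finset.sum_congr rfl fun x _ => by ring

lemma gradForm_isSymm (m : ℕ) (x : V) : (gradForm w μ m x).IsSymm := by
  refine ⟨fun u v => ?_⟩
  rw [gradForm_apply, gradForm_apply]
  split_ifs
  · simp only [ggam]
    congr 1
    exact Finset.sum_congr rfl fun y _ => by ring
  · ring

lemma gradForm_self_nonneg (hw : ∀ x y, 0 ≤ w x y) (hμ : ∀ x, 0 < μ x) (m : ℕ) (x : V)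
    (u : V → ℝ) : 0 ≤ gradForm w μ m x u u := by
  rw [gradForm_apply]
  split_ifs
  · refine mul_nonneg (by have := hμ x; positivity) (Finset.sum_nonneg fun y _ => ?_)
    rw [mul_assoc]
    exact mul_nonneg (hw x y) (mul_self_nonneg _)
  · exact mul_self_nonneg _

noncomputable def sobolevForm (m : ℕ) : V ⊕ V → LinearMap.BilinForm ℝ (V → ℝ) :=
  Sum.elim (gradForm w μ m) evalForm

noncomputable def sobolevWeight (h : V → ℝ) : V ⊕ V → ℝ := Sum.elim μ (μ * h)

lemma powerPairing_sobolev_apply (h : V → ℝ) (m : ℕ) (p : ℝ) (u φ : V → ℝ) :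
    powerPairing (sobolevForm w μ m) (sobolevWeight μ h) p u φ
      = Bmp w μ m p u φ + intV μ (fun x => h x * |u x| ^ (p - 2) * u x * φ x) := by
  rw [powerPairing_apply, Fintype.sum_sum_type, Bmp_eq_sum, intV]
  congr 1 <;> refine Finset.sum_congr rfl fun x _ => ?_
  · simp only [sobolevForm, sobolevWeight, Sum.elim_inl, mul_assoc]
  · simp only [sobolevForm, sobolevWeight, Sum.elim_inr, evalForm_apply,
      Real.sqrt_mul_self_eq_abs, Pi.mul_apply]
    ring

theorem isCoerciveGradient_sobolev (hw : ∀ x y, 0 ≤ w x y) (hμ : ∀ x, 0 < μ x) {h : V → ℝ}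
    (hh : ∀ x, 0 < h x) (m : ℕ) {p : ℝ} (hp : 2 ≤ p) :
    IsCoerciveGradient (powerEnergy (sobolevForm w μ m) (sobolevWeight μ h) p)
      fun u =>
        (powerPairing (sobolevForm w μ m) (sobolevWeight μ h) p u).toContinuousLinearMap := by
  obtain ⟨κ, hκ, hdef⟩ := exists_pos_mul_norm_sq_le_sum fun x => mul_pos (hμ x) (hh x)
  refine isCoerciveGradient_powerEnergy (Sum.forall.2 ⟨gradForm_isSymm w μ m, ?_⟩)
    (Sum.forall.2 ⟨gradForm_self_nonneg w μ hw hμ m, fun x u => mul_self_nonneg (u x)⟩)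
    (Sum.forall.2 ⟨fun x => (hμ x).le, fun x => (mul_pos (hμ x) (hh x)).le⟩) hp hκ fun u => ?_
  · exact fun x => ⟨fun u v => mul_comm (u x) (v x)⟩
  · rw [Fintype.sum_sum_type]
    refine (hdef u).trans (le_add_of_nonneg_of_le (Finset.sum_nonneg fun x _ =>
      mul_nonneg (hμ x).le (gradForm_self_nonneg w μ hw hμ m x u)) (le_of_eq ?_))
    simp [sobolevForm, sobolevWeight, sq]

end Graph

theorem stmt8_general {V : Type*} [Fintype V]
    (w : V → V → ℝ) (μ : V → ℝ)
    (hw_nonneg : ∀ x y, 0 ≤ w x y)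
    (hμ : ∀ x, 0 < μ x)
    (m1 m2 : ℕ)
    (p q : ℝ) (hp : 2 ≤ p) (hq : 2 ≤ q)
    (h1 h2 : V → ℝ) (hh1 : ∀ x, 0 < h1 x) (hh2 : ∀ x, 0 < h2 x) :
    ∃ T : ((V → ℝ) × (V → ℝ)) → (((V → ℝ) × (V → ℝ)) →L[ℝ] ℝ),
      (∀ u v φ1 φ2 : V → ℝ, T (u, v) (φ1, φ2) =
          Bmp w μ m1 p u φ1 + intV μ (fun x => h1 x * |u x| ^ (p - 2) * u x * φ1 x) +
          Bmp w μ m2 q v φ2 + intV μ (fun x => h2 x * |v x| ^ (q - 2) * v x * φ2 x)) ∧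
      Function.Bijective T ∧
      ∃ Tinv : (((V → ℝ) × (V → ℝ)) →L[ℝ] ℝ) → ((V → ℝ) × (V → ℝ)),
        Function.LeftInverse Tinv T ∧ Function.RightInverse Tinv T ∧
          Continuous Tinv := by
  have hT := ((isCoerciveGradient_sobolev w μ hw_nonneg hμ hh1 m1 hp).prod
    (isCoerciveGradient_sobolev w μ hw_nonneg hμ hh2 m2 hq)).isHomeomorph
  refine ⟨_, fun u v φ1 φ2 => ?_, hT.bijective, (isHomeomorph_iff_exists_inverse.1 hT).2⟩
  simp only [ContinuousLinearMap.coprod_apply, LinearMap.coe_toContinuousLinearMap',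
    powerPairing_sobolev_apply]
  ring

/-- Lemma 3.4: the Gâteaux derivative `T = Φ'` of the functional `Φ`, given by the stated
pairing formula, is a bijection from `W` onto `W*` with continuous inverse. -/
theorem stmt8 {V : Type*} [Fintype V] [Nonempty V]
    (w : V → V → ℝ) (μ : V → ℝ)
    (hw_symm : ∀ x y, w x y = w y x) (hw_nonneg : ∀ x y, 0 ≤ w x y)
    (hw_diag : ∀ x, w x x = 0) (hμ : ∀ x, 0 < μ x)
    (m1 m2 : ℕ) (hm1 : 1 ≤ m1) (hm2 : 1 ≤ m2)
    (p q : ℝ) (hp : 2 ≤ p) (hq : 2 ≤ q)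
    (h1 h2 : V → ℝ) (hh1 : ∀ x, 0 < h1 x) (hh2 : ∀ x, 0 < h2 x) :
    ∃ T : ((V → ℝ) × (V → ℝ)) → (((V → ℝ) × (V → ℝ)) →L[ℝ] ℝ),
      (∀ u v φ1 φ2 : V → ℝ, T (u, v) (φ1, φ2) =
          Bmp w μ m1 p u φ1 + intV μ (fun x => h1 x * |u x| ^ (p - 2) * u x * φ1 x) +
          Bmp w μ m2 q v φ2 + intV μ (fun x => h2 x * |v x| ^ (q - 2) * v x * φ2 x)) ∧
      Function.Bijective T ∧
      ∃ Tinv : (((V → ℝ) × (V → ℝ)) →L[ℝ] ℝ) → ((V → ℝ) × (V → ℝ)),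
        Function.LeftInverse Tinv T ∧ Function.RightInverse Tinv T ∧
          Continuous Tinv :=
  stmt8_general w μ hw_nonneg hμ m1 m2 p q hp hq h1 h2 hh1 hh2
end

section
/- (Combined four-case inequality of Lemma 3.4) Let p ≥ q > 1 be real numbers and c_p, c_q > 0. Then for all real a,b ≥ 0: c_p·a^p + c_q·b^q ≥ (min{c_p,c_q}/2^{p−1})·min((a+b)^p, (a+b)^q); equivalently, c_p·a^p + c_q·b^q ≥ (min{c_p,c_q}/2^{p−1})·(a+b)^p when a+b ≤ 1 and c_p·a^p + c_q·b^q ≥ (min{c_p,c_q}/2^{p−1})·(a+b)^q when a+b > 1. -/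
/-!
Up to the factor `2^(p-1)`, for `a + b ≤ 1` the bound is convexity of `u ↦ u^p` together with
`b^p ≤ b^q`. For `a + b ≥ 1` convexity of `u ↦ u^q` reduces it to
`x^q + y^q ≤ x^p + 2^(p-q) y^q` with `x = 2a`, `y = 2b`, `x + y ≥ 2`. This is clear if `x ≥ 1`;
otherwise `y ≥ 1`, and the loss `x^q - x^p ≤ x - x^(1+(p-q))` is paid for by `2^(p-q) - 1`, because
`x - x^(1+t) ≤ -t x log x ≤ t / e ≤ t log 2 ≤ 2^t - 1`.
-/

open Real

namespace Real

lemma negMulLog_le_exp_neg_one {x : ℝ} (hx : 0 < x) : negMulLog x ≤ exp (-1) := by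
  have h := add_one_le_exp (-log x - 1)
  rw [exp_sub, exp_neg, exp_log hx] at h
  calc negMulLog x = x * (-log x) := by rw [negMulLog]; ring
    _ ≤ x * (x⁻¹ / exp 1) := by gcongr; linarith
    _ = exp (-1) := by rw [exp_neg]; field_simp

lemma exp_neg_one_le_log_two : exp (-1) ≤ log 2 := by
  have he : 2 ≤ exp 1 := by linarith [add_one_le_exp (1 : ℝ)]
  have : exp (-1) ≤ 1 / 2 := by
    rw [exp_neg, inv_eq_one_div]
    exact one_div_le_one_div_of_le two_pos he
  linarith [log_two_gt_d9]

lemma self_sub_rpow_one_add_le {x t : ℝ} (hx : 0 ≤ x) (ht : 0 ≤ t) :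
    x - x ^ (1 + t) ≤ 2 ^ t - 1 := by
  have h2t : 1 + t * log 2 ≤ 2 ^ t := by
    rw [rpow_def_of_pos two_pos]
    linarith [add_one_le_exp (log 2 * t)]
  rcases hx.eq_or_lt with rfl | hx
  · rw [zero_rpow (by linarith)]
    nlinarith [log_pos one_lt_two]
  have hxt : 1 + t * log x ≤ x ^ t := by
    rw [rpow_def_of_pos hx]
    linarith [add_one_le_exp (log x * t)]
  calc x - x ^ (1 + t) = x * (1 - x ^ t) := by rw [rpow_add hx, rpow_one]; ring
    _ ≤ x * -(t * log x) := by gcongr; linarith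
    _ = t * negMulLog x := by rw [negMulLog]; ring
    _ ≤ t * log 2 := by
      gcongr
      exact (negMulLog_le_exp_neg_one hx).trans exp_neg_one_le_log_two
    _ ≤ 2 ^ t - 1 := by linarith

lemma rpow_add_rpow_le_of_two_le_add {p q x y : ℝ} (hq : 1 ≤ q) (hpq : q ≤ p)
    (hx : 0 ≤ x) (hy : 0 ≤ y) (hxy : 2 ≤ x + y) :
    x ^ q + y ^ q ≤ x ^ p + 2 ^ (p - q) * y ^ q := by
  have h2pq : 1 ≤ (2 : ℝ) ^ (p - q) := one_le_rpow one_le_two (by linarith)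
  have hyq : 0 ≤ y ^ q := rpow_nonneg hy q
  rcases le_or_gt 1 x with hx1 | hx1
  · have : x ^ q ≤ x ^ p := rpow_le_rpow_of_exponent_le hx1 hpq
    nlinarith
  have hy1 : 1 ≤ y ^ q := one_le_rpow (by linarith) (by linarith)
  have hxq : x ^ q ≤ x := by
    simpa using rpow_le_rpow_of_exponent_ge' hx hx1.le zero_le_one hq
  have hxpq : x ^ (p - q) ≤ 1 := rpow_le_one hx hx1.le (by linarith)
  have hloss : x ^ q - x ^ p ≤ x - x ^ (1 + (p - q)) :=
    calc x ^ q - x ^ p = x ^ q * (1 - x ^ (p - q)) := by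
          rw [mul_sub, mul_one, ← rpow_add' hx (by linarith), add_sub_cancel]
      _ ≤ x * (1 - x ^ (p - q)) := by gcongr
      _ = x - x ^ (1 + (p - q)) := by
          rw [rpow_add' hx (by linarith), rpow_one]; ring
  have hgain : 2 ^ (p - q) - 1 ≤ (2 ^ (p - q) - 1) * y ^ q :=
    le_mul_of_one_le_right (sub_nonneg.2 h2pq) hy1
  linarith [self_sub_rpow_one_add_le hx (sub_nonneg.2 hpq)]

lemma add_rpow_le_two_rpow_mul {a b r : ℝ} (ha : 0 ≤ a) (hb : 0 ≤ b) (hr : 1 ≤ r) :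
    (a + b) ^ r ≤ 2 ^ (r - 1) * (a ^ r + b ^ r) := by
  lift a to NNReal using ha
  lift b to NNReal using hb
  exact_mod_cast NNReal.rpow_add_le_mul_rpow_add_rpow a b hr

lemma min_add_rpow_le_two_rpow_mul {p q a b : ℝ} (hq : 1 ≤ q) (hpq : q ≤ p)
    (ha : 0 ≤ a) (hb : 0 ≤ b) :
    min ((a + b) ^ p) ((a + b) ^ q) ≤ 2 ^ (p - 1) * (a ^ p + b ^ q) := by
  rcases le_or_gt (a + b) 1 with hs | hs
  · have hb' : b ^ p ≤ b ^ q :=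
      rpow_le_rpow_of_exponent_ge' hb (by linarith) (by linarith) hpq
    calc min ((a + b) ^ p) ((a + b) ^ q) ≤ (a + b) ^ p := min_le_left _ _
      _ ≤ 2 ^ (p - 1) * (a ^ p + b ^ p) := add_rpow_le_two_rpow_mul ha hb (hq.trans hpq)
      _ ≤ 2 ^ (p - 1) * (a ^ p + b ^ q) := by gcongr
  have h2a : ∀ r : ℝ, (2 * a) ^ r = 2 ^ r * a ^ r := fun r ↦ mul_rpow zero_le_two ha
  have h2b : ∀ r : ℝ, (2 * b) ^ r = 2 ^ r * b ^ r := fun r ↦ mul_rpow zero_le_two hb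
  have hdoubled := rpow_add_rpow_le_of_two_le_add hq hpq (x := 2 * a) (y := 2 * b)
    (by positivity) (by positivity) (by linarith)
  rw [h2a, h2a, h2b, ← mul_assoc, ← rpow_add two_pos, sub_add_cancel] at hdoubled
  calc min ((a + b) ^ p) ((a + b) ^ q) ≤ (a + b) ^ q := min_le_right _ _
    _ ≤ 2 ^ (q - 1) * (a ^ q + b ^ q) := add_rpow_le_two_rpow_mul ha hb hq
    _ = (2 ^ q * a ^ q + 2 ^ q * b ^ q) / 2 := by rw [rpow_sub_one two_ne_zero]; ring
    _ ≤ (2 ^ p * a ^ p + 2 ^ p * b ^ q) / 2 := by gcongr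
    _ = 2 ^ (p - 1) * (a ^ p + b ^ q) := by rw [rpow_sub_one two_ne_zero]; ring

end Real

/-- Combined four-case inequality of Lemma 3.4: for `p ≥ q > 1` and `c_p, c_q > 0`,
for all `a, b ≥ 0` one has
`c_p·a^p + c_q·b^q ≥ (min{c_p,c_q}/2^{p−1})·min((a+b)^p, (a+b)^q)`. -/
theorem stmt10 (p q : ℝ) (hq : 1 < q) (hpq : q ≤ p)
    (cp cq : ℝ) (hcp : 0 < cp) (hcq : 0 < cq)
    (a b : ℝ) (ha : 0 ≤ a) (hb : 0 ≤ b) :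
    min cp cq / (2 : ℝ) ^ (p - 1) * min ((a + b) ^ p) ((a + b) ^ q) ≤
      cp * a ^ p + cq * b ^ q := by
  have hc : 0 ≤ min cp cq := (lt_min hcp hcq).le
  have h2 : (0 : ℝ) < 2 ^ (p - 1) := rpow_pos_of_pos two_pos _
  calc min cp cq / 2 ^ (p - 1) * min ((a + b) ^ p) ((a + b) ^ q)
      ≤ min cp cq / 2 ^ (p - 1) * (2 ^ (p - 1) * (a ^ p + b ^ q)) := by
        gcongr
        exact min_add_rpow_le_two_rpow_mul hq.le hpq ha hb
    _ = min cp cq * a ^ p + min cp cq * b ^ q := by field_simp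
    _ ≤ cp * a ^ p + cq * b ^ q := by
        gcongr
        exacts [min_le_left _ _, min_le_right _ _]
end
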